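/- arXiv:1907.01711 — 3 statements merged into one kernel-verified Lean document; each statement's English description precedes it below -/
import Mathlib

section
/- Let ε, ρ̄, ā, Δt, Δx₁, Δx₂ > 0, let ū = (ū₁, ū₂) ∈ ℝ² be a constant vector, and let b₁, b₂, b₃ be arbitrary real coefficients. Let ρ : [0,∞) × ℝ² → ℝ and u : [0,∞) × ℝ² → ℝ² be smooth, ℤ²-periodic in space, and solve pointwise the modified equation system of the first-order fully-discrete IMEX-RK scheme for the wave equation: ∂_t ρ + ū·∇ρ + ρ̄ (∇·u) = Δt [ b₁ (ū·∇)²ρ + b₃ (ā²/ε²) Δρ + b₂ ρ̄ (ū·∇)(∇·u) ] + (1/2)( Δx₁ |ū₁| ∂²_{x₁} ρ + Δx₂ |ū₂| ∂²_{x₂} ρ ), and ∂_t u + (ū·∇)u + (ā²/(ρ̄ ε²)) ∇ρ = Δt [ b₁ (ū·∇)²u + b₃ (ā²/ε²) ∇(∇·u) + b₂ (ā²/(ρ̄ ε²)) (ū·∇)∇ρ ] + (1/2)( Δx₁ |ū₁| ∂²_{x₁} u + Δx₂ |ū₂| ∂²_{x₂} u ). If ρ(0,·) is spatially constant and ∇·u(0,·)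 ≡ 0, then for every t ≥ 0, ρ(t,·) is spatially constant and ∇·u(t,·) ≡ 0. -/
/-- Partial derivative `∂f/∂xᵢ` of a scalar function on `ℝ^d`. -/
noncomputable def pd {d : ℕ} (i : Fin d) (f : (Fin d → ℝ) → ℝ) (x : Fin d → ℝ) : ℝ :=
  fderiv ℝ f x (Pi.single i 1)

/-- Constant-coefficient advection operator `(w·∇)f = Σᵢ wᵢ ∂f/∂xᵢ`. -/
noncomputable def adv {d : ℕ} (w : Fin d → ℝ) (f : (Fin d → ℝ) → ℝ) : (Fin d → ℝ) → ℝ :=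
  fun x => ∑ i, w i * pd i f x

/-- Laplacian `Δf = Σᵢ ∂²f/∂xᵢ²` of a scalar function on `ℝ^d`. -/
noncomputable def lap {d : ℕ} (f : (Fin d → ℝ) → ℝ) : (Fin d → ℝ) → ℝ :=
  fun x => ∑ i, pd i (pd i f) x

/-- Divergence `∇·u = Σᵢ ∂uᵢ/∂xᵢ` of a vector field on `ℝ^d`. -/
noncomputable def dvg {d : ℕ} (u : (Fin d → ℝ) → Fin d → ℝ) : (Fin d → ℝ) → ℝ :=
  fun x => ∑ i, pd i (fun y => u y i) x


noncomputable section
open MeasureTheory Complex Set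


def mc (m : ℤ) : ℂ := -(2 * Real.pi * m) * Complex.I

def fe (m : ℤ) (s : ℝ) : ℂ := Complex.exp (mc m * s)

lemma fe_hasDerivAt (m : ℤ) (s : ℝ) : HasDerivAt (fe m) (mc m * fe m s) s := by
  have h1 : HasDerivAt (fun z : ℂ => Complex.exp (mc m * z)) (mc m * Complex.exp (mc m * s)) s := by
    have h0 := (Complex.hasDerivAt_exp (mc m * s)).comp (s:ℂ)
      ((hasDerivAt_id (s:ℂ)).const_mul (mc m))
    rw [mul_comm] at h0
    simp only [mul_one] at h0
    exact h0
  exact h1.comp_ofReal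

lemma fe_norm (m : ℤ) (s : ℝ) : ‖fe m s‖ = 1 := by
  rw [fe, Complex.norm_exp]
  have : (mc m * s).re = 0 := by simp [mc]
  simp [this]

lemma fe_exp_int (m : ℤ) : Complex.exp (mc m) = 1 := by
  have : mc m = (-m : ℤ) * (2 * Real.pi * Complex.I) := by push_cast [mc]; ring
  rw [this, Complex.exp_int_mul_two_pi_mul_I]

lemma fe_periodic (m : ℤ) (s : ℝ) : fe m (s + 1) = fe m s := by
  simp [fe, mul_add, Complex.exp_add, fe_exp_int]

lemma fe_continuous (m : ℤ) : Continuous (fe m) := by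
  unfold fe; fun_prop

lemma fe_one (m : ℤ) : fe m 1 = 1 := by simp [fe, fe_exp_int]
lemma fe_zero (m : ℤ) : fe m 0 = 1 := by simp [fe]

abbrev V2 := Fin 2 → ℝ
abbrev W2 := ℝ × V2

/-- spatially good: smooth and ℤ²-periodic -/
structure SG (g : V2 → ℝ) : Prop where
  smooth : ContDiff ℝ (⊤ : ℕ∞) g
  per : ∀ (x : V2) (k : Fin 2 → ℤ), g (fun i => x i + (k i : ℝ)) = g x

/-- jointly good -/
structure Good (f : W2 → ℝ) : Prop where
  smooth : ContDiff ℝ (⊤ : ℕ∞) f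
  per : ∀ (t : ℝ) (x : V2) (k : Fin 2 → ℤ), f (t, fun i => x i + (k i : ℝ)) = f (t, x)

lemma fderiv_comp_add {E F : Type*} [NormedAddCommGroup E] [NormedSpace ℝ E]
    [NormedAddCommGroup F] [NormedSpace ℝ F] (f : E → F) (c x : E)
    (hd : DifferentiableAt ℝ f (x + c)) :
    fderiv ℝ (fun y => f (y + c)) x = fderiv ℝ f (x + c) := by
  have h := hd.hasFDerivAt.comp x ((hasFDerivAt_id x).add_const c)
  exact h.fderiv

lemma SG.pd {g : V2 → ℝ} (hg : SG g) (j : Fin 2) : SG (pd j g) := by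
  constructor
  · exact (hg.smooth.fderiv_right (by simp)).clm_apply contDiff_const
  · intro x k
    set c : V2 := fun i => (k i : ℝ) with hc
    have hxc : (fun i => x i + (k i : ℝ)) = x + c := by funext i; simp [hc]
    have hfun : (fun y : V2 => g (y + c)) = g := by
      funext y
      have := hg.per y k
      exact this
    have hdiff : DifferentiableAt ℝ g (x + c) := (hg.smooth.differentiable (by simp)) _
    have : fderiv ℝ g x = fderiv ℝ g (x + c) := by
      conv_lhs => rw [← hfun]
      exact fderiv_comp_add g c x hdiff
    simp only [_root_.pd, hxc, ← this]

lemma SG.continuous {g : V2 → ℝ} (hg : SG g) : Continuous g :=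
  hg.smooth.continuous

lemma SG.add {g h : V2 → ℝ} (hg : SG g) (hh : SG h) : SG (fun x => g x + h x) :=
  ⟨hg.smooth.add hh.smooth, fun x k => by simp [hg.per x k, hh.per x k]⟩

/-- slice of a good function is SG -/
lemma Good.slice {f : W2 → ℝ} (hf : Good f) (t : ℝ) : SG (fun y => f (t, y)) :=
  ⟨hf.smooth.comp (contDiff_const.prodMk contDiff_id), fun x k => hf.per t x k⟩

def Dt (f : W2 → ℝ) : W2 → ℝ := fun p => fderiv ℝ f p (1, 0)

lemma Good.Dt' {f : W2 → ℝ} (hf : Good f) : Good (Dt f) := by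
  constructor
  · exact (hf.smooth.fderiv_right (by simp)).clm_apply contDiff_const
  · intro t x k
    set c : W2 := (0, fun i => (k i : ℝ)) with hc
    have hxc : ((t, fun i => x i + (k i : ℝ)) : W2) = (t, x) + c := by
      simp only [hc, Prod.mk_add_mk, add_zero]; constructor <;> simp
    have hfun : (fun p : W2 => f (p + c)) = f := by
      funext p
      have h2 := hf.per p.1 p.2 k
      have h3 : (p + c) = (p.1, fun i => p.2 i + (k i : ℝ)) := by
        apply Prod.ext
        · simp [hc]
        · funext i; simp [hc]
      rw [h3, h2]
    have hdiff : DifferentiableAt ℝ f ((t, x) + c) := (hf.smooth.differentiable (by simp)) _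
    have : fderiv ℝ f (t, x) = fderiv ℝ f ((t, x) + c) := by
      conv_lhs => rw [← hfun]
      exact fderiv_comp_add f c (t, x) hdiff
    simp only [_root_.Dt, hxc, ← this]

lemma hasDerivAt_slice {f : W2 → ℝ} (hf : Good f) (t : ℝ) (x : V2) :
    HasDerivAt (fun s => f (s, x)) (Dt f (t, x)) t := by
  have h1 : HasDerivAt (fun s : ℝ => ((s, x) : W2)) ((1 : ℝ), (0 : V2)) t :=
    (hasDerivAt_id t).prodMk (hasDerivAt_const t x)
  exact ((hf.smooth.differentiable (by simp) (t, x)).hasFDerivAt.comp_hasDerivAt t h1 :)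

lemma deriv_slice {f : W2 → ℝ} (hf : Good f) (t : ℝ) (x : V2) :
    deriv (fun s => f (s, x)) t = Dt f (t, x) :=
  (hasDerivAt_slice hf t x).deriv

lemma pd_eval {g : V2 → ℝ} (hg : Differentiable ℝ g) (j : Fin 2) (x : V2) :
    pd j g x = fderiv ℝ g x (Pi.single j 1) := rfl

/-- the constant function case -/
lemma pd_const (c : ℝ) (j : Fin 2) (x : V2) : pd j (fun _ => c) x = 0 := by
  simp [pd]

lemma SG.const (c : ℝ) : SG (fun _ : V2 => c) :=
  ⟨contDiff_const, fun _ _ => rfl⟩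



def vv (p : ℝ × ℝ) : V2 := ![p.1, p.2]

lemma vv_cont : Continuous vv := by
  apply continuous_pi
  intro i
  fin_cases i
  · simpa [vv] using continuous_fst
  · simpa [vv] using continuous_snd

lemma vv_eq (x : V2) : vv (x 0, x 1) = x := by
  funext i; fin_cases i <;> simp [vv]

lemma vv_mk (s t : ℝ) : vv (s, t) = ![s, t] := rfl

def P2 : Set (ℝ × ℝ) := Ioc (0:ℝ) 1 ×ˢ Ioc (0:ℝ) 1

lemma P2_meas : MeasurableSet P2 := measurableSet_Ioc.prod measurableSet_Ioc

lemma integrableOn_P2 {F : ℝ × ℝ → ℂ} (hF : Continuous F) : IntegrableOn F P2 :=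
  (hF.continuousOn.integrableOn_compact (isCompact_Icc.prod isCompact_Icc)).mono_set
    (prod_mono Ioc_subset_Icc_self Ioc_subset_Icc_self)

/-- Fourier-type coefficient of a function on the 2-torus. -/
def coef (k : Fin 2 → ℤ) (g : V2 → ℝ) : ℂ :=
  ∫ p in P2, (g (vv p) : ℂ) * (fe (k 0) p.1 * fe (k 1) p.2)

lemma coef_integrand_cont {g : V2 → ℝ} (hg : Continuous g) (k : Fin 2 → ℤ) :
    Continuous (fun p : ℝ × ℝ => (g (vv p) : ℂ) * (fe (k 0) p.1 * fe (k 1) p.2)) :=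
  (Complex.continuous_ofReal.comp (hg.comp vv_cont)).mul
    (((fe_continuous _).comp continuous_fst).mul ((fe_continuous _).comp continuous_snd))

lemma coef_congr {g h : V2 → ℝ} (k : Fin 2 → ℤ) (he : ∀ x, g x = h x) : coef k g = coef k h := by
  unfold coef; congr 1; funext p; rw [he]

lemma coef_sum {n : ℕ} (k : Fin 2 → ℤ) (c : Fin n → ℝ) (f : Fin n → V2 → ℝ)
    (hf : ∀ i, Continuous (f i)) :
    coef k (fun x => ∑ i, c i * f i x) = ∑ i, (c i : ℂ) * coef k (f i) := by
  unfold coef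
  have h1 : ∀ p : ℝ × ℝ, (((∑ i, c i * f i (vv p) : ℝ)) : ℂ) * (fe (k 0) p.1 * fe (k 1) p.2)
      = ∑ i, (c i : ℂ) * ((f i (vv p) : ℂ) * (fe (k 0) p.1 * fe (k 1) p.2)) := by
    intro p
    push_cast
    rw [Finset.sum_mul]
    congr 1; funext i; ring
  simp_rw [h1]
  rw [integral_finset_sum]
  · congr 1; funext i
    exact integral_const_mul _ _
  · intro i _
    exact integrableOn_P2 (continuous_const.mul (coef_integrand_cont (hf i) k))

lemma iterA {F : ℝ × ℝ → ℂ} (hF : Continuous F) :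
    ∫ p in P2, F p = ∫ s in (0:ℝ)..1, ∫ t in (0:ℝ)..1, F (s, t) := by
  have hi : IntegrableOn F P2 := integrableOn_P2 hF
  rw [Measure.volume_eq_prod] at hi ⊢
  rw [P2, setIntegral_prod F hi]
  rw [intervalIntegral.integral_of_le (zero_le_one)]
  simp_rw [intervalIntegral.integral_of_le (zero_le_one : (0:ℝ) ≤ 1)]

lemma iterB {F : ℝ × ℝ → ℂ} (hF : Continuous F) :
    ∫ p in P2, F p = ∫ t in (0:ℝ)..1, ∫ s in (0:ℝ)..1, F (s, t) := by
  rw [iterA hF]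
  have hi : Integrable (Function.uncurry (fun s t => F (s, t)))
      ((volume.restrict (Ioc (0:ℝ) 1)).prod (volume.restrict (Ioc (0:ℝ) 1))) := by
    rw [Measure.prod_restrict, ← Measure.volume_eq_prod]
    exact integrableOn_P2 hF
  have h := MeasureTheory.integral_integral_swap hi
  rw [intervalIntegral.integral_of_le (zero_le_one : (0:ℝ) ≤ 1)]
  simp_rw [intervalIntegral.integral_of_le (zero_le_one : (0:ℝ) ≤ 1)]
  exact h

lemma hasDerivAt_ofReal_comp {f : ℝ → ℝ} {f' x : ℝ} (h : HasDerivAt f f' x) :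
    HasDerivAt (fun s => ((f s : ℝ) : ℂ)) (f' : ℂ) x := by
  exact h.ofReal_comp

lemma parts1 (m : ℤ) (g g' : ℝ → ℂ) (hd : ∀ s, HasDerivAt g (g' s) s) (hc : Continuous g')
    (hper : g 1 = g 0) :
    ∫ s in (0:ℝ)..1, g' s * fe m s = (-mc m) * ∫ s in (0:ℝ)..1, g s * fe m s := by
  have hgc : Continuous g := by
    rw [continuous_iff_continuousAt]; exact fun s => (hd s).continuousAt
  have h := intervalIntegral.integral_deriv_mul_eq_sub (a := (0:ℝ)) (b := (1:ℝ)) (u := g) (v := fe m) (u' := g')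
    (v' := fun s => mc m * fe m s) (fun x _ => hd x) (fun s _ => fe_hasDerivAt m s)
    (hc.intervalIntegrable _ _)
    ((continuous_const.mul (fe_continuous m)).intervalIntegrable _ _)
  rw [fe_one, fe_zero, hper] at h
  simp only [mul_one, sub_self] at h
  have hsplit : ∫ s in (0:ℝ)..1, (g' s * fe m s + g s * (mc m * fe m s))
      = (∫ s in (0:ℝ)..1, g' s * fe m s) + ∫ s in (0:ℝ)..1, g s * (mc m * fe m s) :=
    intervalIntegral.integral_add ((hc.mul (fe_continuous m)).intervalIntegrable _ _)
      ((hgc.mul (continuous_const.mul (fe_continuous m))).intervalIntegrable _ _)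
  rw [hsplit] at h
  have hpull : ∫ s in (0:ℝ)..1, g s * (mc m * fe m s)
      = mc m * ∫ s in (0:ℝ)..1, g s * fe m s := by
    rw [← intervalIntegral.integral_const_mul]
    congr 1; funext s; ring
  rw [hpull] at h
  linear_combination h

/-- derivative along the first coordinate line -/
lemma hasDerivAt_line0 {g : V2 → ℝ} (hg : Differentiable ℝ g) (t s : ℝ) :
    HasDerivAt (fun s' => g ![s', t]) (pd 0 g ![s, t]) s := by
  have hcurve : HasDerivAt (fun s' : ℝ => (![s', t] : V2)) (Pi.single 0 1) s := by
    have h1 : HasDerivAt (fun s' : ℝ => s' • (Pi.single 0 1 : V2) + ![0, t])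
        ((1:ℝ) • (Pi.single 0 1 : V2)) s :=
      ((hasDerivAt_id s).smul_const _).add_const _
    have h2 : (fun s' : ℝ => s' • (Pi.single 0 1 : V2) + ![0, t]) = fun s' => (![s', t] : V2) := by
      funext s'; funext i; fin_cases i <;> simp [Pi.single_apply]
    rw [h2, one_smul] at h1
    exact h1
  exact ((hg ![s, t]).hasFDerivAt.comp_hasDerivAt s hcurve :)

lemma hasDerivAt_line1 {g : V2 → ℝ} (hg : Differentiable ℝ g) (s t : ℝ) :
    HasDerivAt (fun t' => g ![s, t']) (pd 1 g ![s, t]) t := by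
  have hcurve : HasDerivAt (fun t' : ℝ => (![s, t'] : V2)) (Pi.single 1 1) t := by
    have h1 : HasDerivAt (fun t' : ℝ => t' • (Pi.single 1 1 : V2) + ![s, 0])
        ((1:ℝ) • (Pi.single 1 1 : V2)) t :=
      ((hasDerivAt_id t).smul_const _).add_const _
    have h2 : (fun t' : ℝ => t' • (Pi.single 1 1 : V2) + ![s, 0]) = fun t' => (![s, t'] : V2) := by
      funext t'; funext i; fin_cases i <;> simp [Pi.single_apply]
    rw [h2, one_smul] at h1
    exact h1
  exact ((hg ![s, t]).hasFDerivAt.comp_hasDerivAt t hcurve :)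

lemma SG.per10 {g : V2 → ℝ} (hg : SG g) (t : ℝ) : g ![1, t] = g ![0, t] := by
  have := hg.per ![0, t] ![1, 0]
  have harg : (fun i => (![0, t] : V2) i + ((![1, 0] : Fin 2 → ℤ) i : ℝ)) = ![1, t] := by
    funext i; fin_cases i <;> simp
  rw [harg] at this
  exact this

lemma SG.per01 {g : V2 → ℝ} (hg : SG g) (s : ℝ) : g ![s, 1] = g ![s, 0] := by
  have := hg.per ![s, 0] ![0, 1]
  have harg : (fun i => (![s, 0] : V2) i + ((![0, 1] : Fin 2 → ℤ) i : ℝ)) = ![s, 1] := by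
    funext i; fin_cases i <;> simp
  rw [harg] at this
  exact this

lemma coef_pd0 (k : Fin 2 → ℤ) {g : V2 → ℝ} (hg : SG g) :
    coef k (pd 0 g) = (-mc (k 0)) * coef k g := by
  have hdg : Differentiable ℝ g := hg.smooth.differentiable (by simp)
  have hpdc : Continuous (pd 0 g) := (hg.pd 0).smooth.continuous
  have hgc : Continuous g := hg.smooth.continuous
  rw [coef, coef, iterB (coef_integrand_cont hpdc k), iterB (coef_integrand_cont hgc k)]
  rw [← intervalIntegral.integral_const_mul]
  congr 1; funext t
  have hre : ∀ (h : V2 → ℝ) (s : ℝ), ((h (vv (s, t)) : ℂ)) * (fe (k 0) s * fe (k 1) t)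
      = (((h ![s, t] : ℂ)) * fe (k 0) s) * fe (k 1) t := by
    intro h s; rw [vv_mk]; ring
  simp_rw [hre]
  rw [intervalIntegral.integral_mul_const, intervalIntegral.integral_mul_const]
  have hparts := parts1 (k 0) (fun s => ((g ![s, t] : ℝ) : ℂ)) (fun s => ((pd 0 g ![s, t] : ℝ) : ℂ))
    (fun s => hasDerivAt_ofReal_comp (hasDerivAt_line0 hdg t s))
    (Complex.continuous_ofReal.comp (hpdc.comp (by
      apply continuous_pi; intro i; fin_cases i <;> simp <;> fun_prop)))
    (by exact_mod_cast hg.per10 t)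
  rw [hparts]
  ring

lemma coef_pd1 (k : Fin 2 → ℤ) {g : V2 → ℝ} (hg : SG g) :
    coef k (pd 1 g) = (-mc (k 1)) * coef k g := by
  have hdg : Differentiable ℝ g := hg.smooth.differentiable (by simp)
  have hpdc : Continuous (pd 1 g) := (hg.pd 1).smooth.continuous
  have hgc : Continuous g := hg.smooth.continuous
  rw [coef, coef, iterA (coef_integrand_cont hpdc k), iterA (coef_integrand_cont hgc k)]
  rw [← intervalIntegral.integral_const_mul]
  congr 1; funext s
  have hre : ∀ (h : V2 → ℝ) (t : ℝ), ((h (vv (s, t)) : ℂ)) * (fe (k 0) s * fe (k 1) t)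
      = (((h ![s, t] : ℂ)) * fe (k 1) t) * fe (k 0) s := by
    intro h t; rw [vv_mk]; ring
  simp_rw [hre]
  rw [intervalIntegral.integral_mul_const, intervalIntegral.integral_mul_const]
  have hparts := parts1 (k 1) (fun t => ((g ![s, t] : ℝ) : ℂ)) (fun t => ((pd 1 g ![s, t] : ℝ) : ℂ))
    (fun t => hasDerivAt_ofReal_comp (hasDerivAt_line1 hdg s t))
    (Complex.continuous_ofReal.comp (hpdc.comp (by
      apply continuous_pi; intro i; fin_cases i <;> simp <;> fun_prop)))
    (by exact_mod_cast hg.per01 s)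
  rw [hparts]
  ring

lemma coef_pd (k : Fin 2 → ℤ) (j : Fin 2) {g : V2 → ℝ} (hg : SG g) :
    coef k (pd j g) = (-mc (k j)) * coef k g := by
  fin_cases j
  · exact coef_pd0 k hg
  · exact coef_pd1 k hg

lemma P2_vol_lt_top : volume P2 < ⊤ :=
  ((measure_mono (prod_mono Ioc_subset_Icc_self Ioc_subset_Icc_self)).trans_lt
    (isCompact_Icc.prod isCompact_Icc).measure_lt_top)

lemma coef_hasDerivAt {f : W2 → ℝ} (hf : Good f) (k : Fin 2 → ℤ) (t₀ : ℝ) :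
    HasDerivAt (fun s => coef k (fun y => f (s, y))) (coef k (fun y => Dt f (t₀, y))) t₀ := by
  have hfc : Continuous f := hf.smooth.continuous
  have hDtc : Continuous (Dt f) := hf.Dt'.smooth.continuous
  set F : ℝ → ℝ × ℝ → ℂ := fun s p => ((f (s, vv p) : ℝ) : ℂ) * (fe (k 0) p.1 * fe (k 1) p.2)
    with hF
  set F' : ℝ → ℝ × ℝ → ℂ := fun s p => ((Dt f (s, vv p) : ℝ) : ℂ) * (fe (k 0) p.1 * fe (k 1) p.2)
    with hF'
  have hcurve : Continuous (fun q : ℝ × (ℝ × ℝ) => ((q.1, vv q.2) : W2)) :=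
    continuous_fst.prodMk (vv_cont.comp continuous_snd)
  have hFc : ∀ s, Continuous (F s) := by
    intro s
    apply Continuous.mul
    · exact Complex.continuous_ofReal.comp (hfc.comp (continuous_const.prodMk vv_cont))
    · exact ((fe_continuous _).comp continuous_fst).mul ((fe_continuous _).comp continuous_snd)
  have hF'c : ∀ s, Continuous (F' s) := by
    intro s
    apply Continuous.mul
    · exact Complex.continuous_ofReal.comp (hDtc.comp (continuous_const.prodMk vv_cont))
    · exact ((fe_continuous _).comp continuous_fst).mul ((fe_continuous _).comp continuous_snd)
  obtain ⟨C, hC⟩ := (isCompact_Icc.prod (isCompact_Icc.prod isCompact_Icc)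
    : IsCompact ((Icc (t₀-1) (t₀+1)) ×ˢ (Icc (0:ℝ) 1 ×ˢ Icc (0:ℝ) 1))).exists_bound_of_continuousOn
    ((hDtc.comp hcurve).continuousOn (s := (Icc (t₀-1) (t₀+1)) ×ˢ (Icc (0:ℝ) 1 ×ˢ Icc (0:ℝ) 1)))
  have key := hasDerivAt_integral_of_dominated_loc_of_deriv_le (μ := volume.restrict P2)
    (F := F) (F' := F') (x₀ := t₀) (bound := fun _ => C) (s := Metric.ball t₀ 1) (Metric.ball_mem_nhds t₀ one_pos)
    (Filter.Eventually.of_forall fun s => (hFc s).aestronglyMeasurable)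
    (integrableOn_P2 (hFc t₀))
    ((hF'c t₀).aestronglyMeasurable)
    ?_ ?_ ?_
  · exact key.2
  · -- bound
    refine (ae_restrict_mem P2_meas).mono fun p hp => fun s hs => ?_
    have h1 : ‖F' s p‖ = |Dt f (s, vv p)| := by
      rw [hF']
      simp only [norm_mul, fe_norm, Complex.norm_real, Real.norm_eq_abs, mul_one, one_mul]
    rw [h1]
    have hmem : (s, p) ∈ (Icc (t₀-1) (t₀+1)) ×ˢ (Icc (0:ℝ) 1 ×ˢ Icc (0:ℝ) 1) := by
      constructor
      · have := Metric.mem_ball.mp hs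
        rw [Real.dist_eq] at this
        constructor <;> [linarith [abs_lt.mp this |>.1]; linarith [abs_lt.mp this |>.2]]
      · exact prod_mono Ioc_subset_Icc_self Ioc_subset_Icc_self hp
    have := hC (s, p) hmem
    simpa [Real.norm_eq_abs] using this
  · exact integrableOn_const P2_vol_lt_top.ne
  · -- derivative
    refine Filter.Eventually.of_forall fun p => fun s hs => ?_
    have h := hasDerivAt_ofReal_comp (hasDerivAt_slice hf s (vv p))
    exact h.mul_const _

lemma unique1 (g : ℝ → ℂ) (hg : Continuous g) (hper : ∀ s, g (s + 1) = g s)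
    (h0 : ∀ m : ℤ, ∫ s in (0:ℝ)..1, g s * fe m s = 0) : ∀ s, g s = 0 := by
  haveI : Fact ((0:ℝ) < 1) := ⟨one_pos⟩
  have hper' : Function.Periodic g 1 := hper
  have hcont : Continuous (AddCircle.liftIco 1 0 g) := by
    apply AddCircle.liftIco_continuous
    · exact (hper 0).symm
    · exact hg.continuousOn
  set G : C(AddCircle (1:ℝ), ℂ) := ⟨AddCircle.liftIco 1 0 g, hcont⟩ with hG
  have hcoeff : ∀ n : ℤ, fourierCoeff (G : AddCircle (1:ℝ) → ℂ) n = 0 := by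
    intro n
    have h1 : fourierCoeff (G : AddCircle (1:ℝ) → ℂ) n = fourierCoeffOn (by norm_num : (0:ℝ) < 0 + 1) g n := by
      exact fourierCoeff_liftIco_eq (T := 1) (a := 0) g n
    rw [h1, fourierCoeffOn_eq_integral]
    have h2 : ∀ x : ℝ, (fourier (-n) (x : AddCircle ((0:ℝ)+1-0))) • g x = g x * fe n x := by
      intro x
      rw [fourier_coe_apply, smul_eq_mul, mul_comm]
      congr 1
      unfold fe mc
      congr 1
      push_cast
      ring
    simp_rw [h2]
    simp only [zero_add, sub_zero, one_smul]
    simpa using h0 n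
  have hsummable : Summable (fourierCoeff (G : AddCircle (1:ℝ) → ℂ)) := by
    apply Summable.congr (f := fun _ : ℤ => (0:ℂ)) summable_zero
    intro n; exact (hcoeff n).symm
  have hsum := hasSum_fourier_series_of_summable (f := G) hsummable
  have hzero : (fun i => fourierCoeff (G : AddCircle (1:ℝ) → ℂ) i • fourier i)
      = fun _ : ℤ => (0 : C(AddCircle (1:ℝ), ℂ)) := by
    funext i; rw [hcoeff i, zero_smul]
  rw [hzero] at hsum
  have hG0 : G = 0 := (hasSum_zero.unique hsum).symm
  intro s
  have h3 : g s = g (Int.fract s) := by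
    have := hper'.sub_int_mul_eq (x := s) (n := ⌊s⌋)
    rw [mul_one] at this
    rw [← this]
    rfl
  have h4 : AddCircle.liftIco 1 0 g ((Int.fract s : ℝ) : AddCircle (1:ℝ)) = g (Int.fract s) :=
    AddCircle.liftIco_coe_apply (by simp [Int.fract_nonneg, Int.fract_lt_one])
  have h5 : AddCircle.liftIco 1 0 g ((Int.fract s : ℝ) : AddCircle (1:ℝ)) = 0 := by
    have := congrArg (fun F : C(AddCircle (1:ℝ), ℂ) => F ((Int.fract s : ℝ) : AddCircle (1:ℝ))) hG0
    simpa [hG] using this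
  rw [h3, ← h4, h5]

lemma unique2 {g : V2 → ℝ} (hgc : Continuous g)
    (hper : ∀ (x : V2) (k : Fin 2 → ℤ), g (fun i => x i + (k i : ℝ)) = g x)
    (h0 : ∀ k : Fin 2 → ℤ, coef k g = 0) : ∀ x, g x = 0 := by
  -- inner coefficient function
  set c1 : ℤ → ℝ → ℂ := fun m s => ∫ t in (0:ℝ)..1, ((g ![s, t] : ℝ) : ℂ) * fe m t with hc1
  have hinner_cont : ∀ m, Continuous (c1 m) := by
    intro m
    have huc : Continuous (Function.uncurry (fun s t : ℝ => ((g ![s, t] : ℝ) : ℂ) * fe m t)) := by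
      apply Continuous.mul
      · exact Complex.continuous_ofReal.comp (hgc.comp (by
          apply continuous_pi; intro i; fin_cases i <;> simp <;> fun_prop))
      · exact (fe_continuous m).comp continuous_snd
    exact intervalIntegral.continuous_parametric_intervalIntegral_of_continuous' huc 0 1
  have hper10 : ∀ (s t : ℝ), g ![s + 1, t] = g ![s, t] := by
    intro s t
    have := hper ![s, t] ![1, 0]
    have harg : (fun i => (![s, t] : V2) i + ((![1, 0] : Fin 2 → ℤ) i : ℝ)) = ![s+1, t] := by
      funext i; fin_cases i <;> simp
    rw [harg] at this; exact this
  have hper01 : ∀ (s t : ℝ), g ![s, t + 1] = g ![s, t] := by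
    intro s t
    have := hper ![s, t] ![0, 1]
    have harg : (fun i => (![s, t] : V2) i + ((![0, 1] : Fin 2 → ℤ) i : ℝ)) = ![s, t+1] := by
      funext i; fin_cases i <;> simp
    rw [harg] at this; exact this
  -- the iterated integral of c1 against fe n is the 2-D coefficient
  have hco : ∀ (n m : ℤ), ∫ s in (0:ℝ)..1, c1 m s * fe n s = 0 := by
    intro n m
    have hcoef := h0 ![n, m]
    rw [coef, iterA (coef_integrand_cont hgc ![n, m])] at hcoef
    simp only [Matrix.cons_val_zero, Matrix.cons_val_one, Matrix.head_cons] at hcoef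
    rw [← hcoef]
    congr 1; funext s
    rw [hc1]
    simp only
    rw [← intervalIntegral.integral_mul_const]
    congr 1; funext t
    rw [vv_mk]
    ring
  have hc1zero : ∀ m s, c1 m s = 0 := by
    intro m
    apply unique1 (c1 m) (hinner_cont m)
    · intro s
      rw [hc1]
      simp only
      congr 1; funext t
      rw [hper10]
    · intro n
      exact hco n m
  intro x
  have hx : x = ![x 0, x 1] := by funext i; fin_cases i <;> simp
  have hline := unique1 (fun t => ((g ![x 0, t] : ℝ) : ℂ)) (Complex.continuous_ofReal.comp
      (hgc.comp (by apply continuous_pi; intro i; fin_cases i <;> simp <;> fun_prop)))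
    (fun t => by simpa using congrArg (fun r => ((r : ℝ) : ℂ)) (hper01 (x 0) t))
    (fun m => hc1zero m (x 0)) (x 1)
  rw [hx]
  exact_mod_cast hline

lemma ode_zero (a q : ℝ → ℂ) (A B C D : ℂ)
    (hda : ∀ t, 0 ≤ t → HasDerivAt a (A * a t + B * q t) t)
    (hdq : ∀ t, 0 ≤ t → HasDerivAt q (C * a t + D * q t) t)
    (hca : Continuous a) (hcq : Continuous q)
    (ha0 : a 0 = 0) (hq0 : q 0 = 0) :
    ∀ t, 0 ≤ t → a t = 0 ∧ q t = 0 := by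
  intro T hT
  set K : ℝ := ‖A‖ + ‖B‖ + ‖C‖ + ‖D‖ with hK
  set P : ℝ → ℂ × ℂ := fun t => (a t, q t) with hP
  have key := norm_le_gronwallBound_of_norm_deriv_right_le (δ := 0) (K := K) (ε := 0)
    (f := P) (a := 0) (b := T)
    (f' := fun t => (A * a t + B * q t, C * a t + D * q t))
    ((hca.prodMk hcq).continuousOn)
    (fun t ht => (((hda t ht.1).prodMk (hdq t ht.1)).hasDerivWithinAt))
    (by simp [hP, ha0, hq0]) ?_
  · have hPT := key T ⟨hT, le_refl T⟩
    have hgb : gronwallBound 0 K 0 (T - 0) = 0 := by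
      rw [gronwallBound_ε0]; simp
    rw [hgb] at hPT
    have h1 : ‖P T‖ = 0 := le_antisymm hPT (norm_nonneg _)
    rw [norm_eq_zero] at h1
    constructor
    · exact congrArg Prod.fst h1
    · exact congrArg Prod.snd h1
  · intro t _
    have hn : ‖(A * a t + B * q t, C * a t + D * q t)‖
        = max ‖A * a t + B * q t‖ ‖C * a t + D * q t‖ := rfl
    have hP' : ‖P t‖ = max ‖a t‖ ‖q t‖ := rfl
    rw [hn, hP']
    have hb1 : ‖A * a t + B * q t‖ ≤ K * max ‖a t‖ ‖q t‖ := by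
      calc ‖A * a t + B * q t‖ ≤ ‖A * a t‖ + ‖B * q t‖ := norm_add_le _ _
        _ = ‖A‖ * ‖a t‖ + ‖B‖ * ‖q t‖ := by rw [norm_mul, norm_mul]
        _ ≤ ‖A‖ * max ‖a t‖ ‖q t‖ + ‖B‖ * max ‖a t‖ ‖q t‖ := by
            gcongr <;> [exact le_max_left _ _; exact le_max_right _ _]
        _ ≤ K * max ‖a t‖ ‖q t‖ := by
            rw [hK]
            have h := le_max_left ‖a t‖ ‖q t‖
            nlinarith [norm_nonneg (a t), norm_nonneg (q t), norm_nonneg C, norm_nonneg D,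
              le_max_left ‖a t‖ ‖q t‖, le_max_right ‖a t‖ ‖q t‖,
              (norm_nonneg (a t)).trans (le_max_left ‖a t‖ ‖q t‖)]
    have hb2 : ‖C * a t + D * q t‖ ≤ K * max ‖a t‖ ‖q t‖ := by
      calc ‖C * a t + D * q t‖ ≤ ‖C * a t‖ + ‖D * q t‖ := norm_add_le _ _
        _ = ‖C‖ * ‖a t‖ + ‖D‖ * ‖q t‖ := by rw [norm_mul, norm_mul]
        _ ≤ ‖C‖ * max ‖a t‖ ‖q t‖ + ‖D‖ * max ‖a t‖ ‖q t‖ := by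
            gcongr <;> [exact le_max_left _ _; exact le_max_right _ _]
        _ ≤ K * max ‖a t‖ ‖q t‖ := by
            rw [hK]
            nlinarith [norm_nonneg A, norm_nonneg B,
              (norm_nonneg (a t)).trans (le_max_left ‖a t‖ ‖q t‖)]
    rw [add_zero]
    exact max_le hb1 hb2

lemma coef_zero (k : Fin 2 → ℤ) : coef k (fun _ => (0:ℝ)) = 0 := by
  unfold coef; simp

lemma coef_cmul (k : Fin 2 → ℤ) (c : ℝ) (g : V2 → ℝ) :
    coef k (fun x => c * g x) = (c : ℂ) * coef k g := by
  unfold coef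
  have h1 : ∀ p : ℝ × ℝ, ((c * g (vv p) : ℝ) : ℂ) * (fe (k 0) p.1 * fe (k 1) p.2)
      = (c : ℂ) * ((g (vv p) : ℂ) * (fe (k 0) p.1 * fe (k 1) p.2)) := by
    intro p; push_cast; ring
  simp_rw [h1]
  exact integral_const_mul _ _

lemma coef_add (k : Fin 2 → ℤ) {g h : V2 → ℝ} (hg : Continuous g) (hh : Continuous h) :
    coef k (fun x => g x + h x) = coef k g + coef k h := by
  unfold coef
  have h1 : ∀ p : ℝ × ℝ, ((g (vv p) + h (vv p) : ℝ) : ℂ) * (fe (k 0) p.1 * fe (k 1) p.2)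
      = (g (vv p) : ℂ) * (fe (k 0) p.1 * fe (k 1) p.2)
        + (h (vv p) : ℂ) * (fe (k 0) p.1 * fe (k 1) p.2) := by
    intro p; push_cast; ring
  simp_rw [h1]
  exact integral_add (integrableOn_P2 (coef_integrand_cont hg k))
    (integrableOn_P2 (coef_integrand_cont hh k))

lemma SG.cmul {g : V2 → ℝ} (hg : SG g) (c : ℝ) : SG (fun x => c * g x) :=
  ⟨contDiff_const.mul hg.smooth, fun x k => by simp [hg.per x k]⟩

lemma SG.adv {g : V2 → ℝ} (hg : SG g) (w : Fin 2 → ℝ) : SG (_root_.adv w g) := by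
  have hrw : _root_.adv w g = fun x => w 0 * _root_.pd 0 g x + w 1 * _root_.pd 1 g x := by
    funext x; exact Fin.sum_univ_two _
  rw [hrw]
  exact ((hg.pd 0).cmul (w 0)).add ((hg.pd 1).cmul (w 1))

lemma SG.dvg {w : V2 → Fin 2 → ℝ} (h0 : SG (fun y => w y 0)) (h1 : SG (fun y => w y 1)) :
    SG (_root_.dvg w) := by
  have hrw : _root_.dvg w = fun x => _root_.pd 0 (fun y => w y 0) x
      + _root_.pd 1 (fun y => w y 1) x := by
    funext x; exact Fin.sum_univ_two _
  rw [hrw]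
  exact (h0.pd 0).add (h1.pd 1)

lemma SG.lap {g : V2 → ℝ} (hg : SG g) : SG (_root_.lap g) := by
  have hrw : _root_.lap g = fun x => _root_.pd 0 (_root_.pd 0 g) x
      + _root_.pd 1 (_root_.pd 1 g) x := by
    funext x; exact Fin.sum_univ_two _
  rw [hrw]
  exact ((hg.pd 0).pd 0).add ((hg.pd 1).pd 1)

lemma coef_adv (k : Fin 2 → ℤ) (w : Fin 2 → ℝ) {g : V2 → ℝ} (hg : SG g) :
    coef k (adv w g) = ((w 0 : ℂ) * (-mc (k 0)) + (w 1 : ℂ) * (-mc (k 1))) * coef k g := by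
  have h := coef_sum k w (fun i => pd i g) (fun i => (hg.pd i).smooth.continuous)
  rw [show adv w g = (fun x => ∑ i, w i * pd i g x) from rfl, h, Fin.sum_univ_two,
    coef_pd k 0 hg, coef_pd k 1 hg]
  ring

lemma coef_lap (k : Fin 2 → ℤ) {g : V2 → ℝ} (hg : SG g) :
    coef k (lap g) = ((-mc (k 0))^2 + (-mc (k 1))^2) * coef k g := by
  have hrw : lap g = fun x => pd 0 (pd 0 g) x + pd 1 (pd 1 g) x := by
    funext x; exact Fin.sum_univ_two _
  rw [hrw, coef_add k ((hg.pd 0).pd 0).smooth.continuous ((hg.pd 1).pd 1).smooth.continuous,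
    coef_pd k 0 (hg.pd 0), coef_pd k 0 hg, coef_pd k 1 (hg.pd 1), coef_pd k 1 hg]
  ring

lemma coef_dvg (k : Fin 2 → ℤ) {w : V2 → Fin 2 → ℝ}
    (h0 : SG (fun y => w y 0)) (h1 : SG (fun y => w y 1)) :
    coef k (dvg w) = (-mc (k 0)) * coef k (fun y => w y 0)
      + (-mc (k 1)) * coef k (fun y => w y 1) := by
  have hrw : dvg w = fun x => pd 0 (fun y => w y 0) x + pd 1 (fun y => w y 1) x := by
    funext x; exact Fin.sum_univ_two _
  rw [hrw, coef_add k (h0.pd 0).smooth.continuous (h1.pd 1).smooth.continuous,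
    coef_pd k 0 h0, coef_pd k 1 h1]

lemma coef_comb7 (k : Fin 2 → ℤ) (c1 c2 c3 c4 c5 c6 c7 : ℝ) (f1 f2 f3 f4 f5 f6 f7 : V2 → ℝ)
    (h1 : Continuous f1) (h2 : Continuous f2) (h3 : Continuous f3) (h4 : Continuous f4)
    (h5 : Continuous f5) (h6 : Continuous f6) (h7 : Continuous f7) :
    coef k (fun x => c1 * f1 x + c2 * f2 x + c3 * f3 x + c4 * f4 x + c5 * f5 x
        + c6 * f6 x + c7 * f7 x)
      = (c1 : ℂ) * coef k f1 + (c2 : ℂ) * coef k f2 + (c3 : ℂ) * coef k f3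
        + (c4 : ℂ) * coef k f4 + (c5 : ℂ) * coef k f5 + (c6 : ℂ) * coef k f6
        + (c7 : ℂ) * coef k f7 := by
  have s6 : Continuous (fun x => c1 * f1 x + c2 * f2 x + c3 * f3 x + c4 * f4 x + c5 * f5 x
      + c6 * f6 x) := by fun_prop
  have s5 : Continuous (fun x => c1 * f1 x + c2 * f2 x + c3 * f3 x + c4 * f4 x + c5 * f5 x) := by
    fun_prop
  have s4 : Continuous (fun x => c1 * f1 x + c2 * f2 x + c3 * f3 x + c4 * f4 x) := by fun_prop
  have s3 : Continuous (fun x => c1 * f1 x + c2 * f2 x + c3 * f3 x) := by fun_prop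
  have s2 : Continuous (fun x => c1 * f1 x + c2 * f2 x) := by fun_prop
  rw [coef_add k s6 (by fun_prop : Continuous fun x => c7 * f7 x), coef_add k s5 (by fun_prop : Continuous fun x => c6 * f6 x),
    coef_add k s4 (by fun_prop : Continuous fun x => c5 * f5 x), coef_add k s3 (by fun_prop : Continuous fun x => c4 * f4 x),
    coef_add k s2 (by fun_prop : Continuous fun x => c3 * f3 x),
    coef_add k (by fun_prop : Continuous fun x => c1 * f1 x) (by fun_prop : Continuous fun x => c2 * f2 x),
    coef_cmul, coef_cmul, coef_cmul, coef_cmul, coef_cmul, coef_cmul, coef_cmul]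

lemma mc_ne_zero {m : ℤ} (hm : m ≠ 0) : mc m ≠ 0 := by
  unfold mc
  intro h
  have h1 : ((2 * Real.pi * (m:ℝ) : ℝ) : ℂ) * Complex.I = 0 := by
    push_cast at h ⊢
    linear_combination -h
  rcases mul_eq_zero.mp h1 with h2 | h2
  · have h3 : (2 * Real.pi * (m:ℝ) : ℝ) = 0 := by exact_mod_cast h2
    rcases mul_eq_zero.mp h3 with h4 | h4
    · rcases mul_eq_zero.mp h4 with h5 | h5
      · norm_num at h5
      · exact Real.pi_ne_zero h5
    · exact hm (by exact_mod_cast h4)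
  · exact Complex.I_ne_zero h2

end

/-- Proposition 6.4: the modified PDE of the first-order fully-discrete IMEX-RK
finite volume scheme applied to the linear wave equation system (in 2-D) leaves the
well-prepared space `{(ρ,u) : ∇ρ = 0, ∇·u = 0}` invariant, for arbitrary
coefficients `b₁, b₂, b₃` and mesh parameters `Δt, Δx₁, Δx₂`. -/
theorem stmt_5 (ε ρb ab Δt Δx₁ Δx₂ : ℝ)
    (hε : 0 < ε) (hρb : 0 < ρb) (hab : 0 < ab) (hΔt : 0 < Δt)
    (hΔx₁ : 0 < Δx₁) (hΔx₂ : 0 < Δx₂)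
    (ub : Fin 2 → ℝ) (b₁ b₂ b₃ : ℝ)
    (ρ : ℝ → (Fin 2 → ℝ) → ℝ) (u : ℝ → (Fin 2 → ℝ) → Fin 2 → ℝ)
    (hρC : ContDiff ℝ (⊤ : ℕ∞) (fun p : ℝ × (Fin 2 → ℝ) => ρ p.1 p.2))
    (huC : ContDiff ℝ (⊤ : ℕ∞) (fun p : ℝ × (Fin 2 → ℝ) => u p.1 p.2))
    (hρper : ∀ (t : ℝ) (x : Fin 2 → ℝ) (k : Fin 2 → ℤ),
      ρ t (fun i => x i + (k i : ℝ)) = ρ t x)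
    (huper : ∀ (t : ℝ) (x : Fin 2 → ℝ) (k : Fin 2 → ℤ),
      u t (fun i => x i + (k i : ℝ)) = u t x)
    (hmass : ∀ (t : ℝ), 0 ≤ t → ∀ (x : Fin 2 → ℝ),
      deriv (fun s => ρ s x) t + adv ub (ρ t) x + ρb * dvg (u t) x
        = Δt * (b₁ * adv ub (adv ub (ρ t)) x
              + b₃ * (ab ^ 2 / ε ^ 2) * lap (ρ t) x
              + b₂ * ρb * adv ub (dvg (u t)) x)
          + (1 / 2) * (Δx₁ * |ub 0| * pd 0 (pd 0 (ρ t)) x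
              + Δx₂ * |ub 1| * pd 1 (pd 1 (ρ t)) x))
    (hmom : ∀ (t : ℝ), 0 ≤ t → ∀ (x : Fin 2 → ℝ) (j : Fin 2),
      deriv (fun s => u s x j) t + adv ub (fun y => u t y j) x
          + (ab ^ 2 / (ρb * ε ^ 2)) * pd j (ρ t) x
        = Δt * (b₁ * adv ub (adv ub (fun y => u t y j)) x
              + b₃ * (ab ^ 2 / ε ^ 2) * pd j (dvg (u t)) x
              + b₂ * (ab ^ 2 / (ρb * ε ^ 2)) * adv ub (pd j (ρ t)) x)
          + (1 / 2) * (Δx₁ * |ub 0| * pd 0 (pd 0 (fun y => u t y j)) x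
              + Δx₂ * |ub 1| * pd 1 (pd 1 (fun y => u t y j)) x))
    (hρ0 : ∀ x y : Fin 2 → ℝ, ρ 0 x = ρ 0 y)
    (hu0 : ∀ x : Fin 2 → ℝ, dvg (u 0) x = 0) :
    ∀ t : ℝ, 0 ≤ t →
      (∀ x y : Fin 2 → ℝ, ρ t x = ρ t y) ∧ (∀ x : Fin 2 → ℝ, dvg (u t) x = 0) := by
  have hGoodR : Good (fun p : W2 => ρ p.1 p.2) := ⟨hρC, fun t x k => hρper t x k⟩
  have hGoodU : ∀ j : Fin 2, Good (fun p : W2 => u p.1 p.2 j) := fun j =>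
    ⟨(ContinuousLinearMap.proj j : (Fin 2 → ℝ) →L[ℝ] ℝ).contDiff.comp huC,
     fun t x k => congrFun (huper t x k) j⟩
  have hSGρ : ∀ t, SG (ρ t) := fun t => hGoodR.slice t
  have hSGu : ∀ (t : ℝ) (j : Fin 2), SG (fun y => u t y j) := fun t j => (hGoodU j).slice t
  have hSGdvg : ∀ t, SG (dvg (u t)) := fun t => SG.dvg (hSGu t 0) (hSGu t 1)
  have main : ∀ (k : Fin 2 → ℤ) (t : ℝ), 0 ≤ t →
      (∀ j : Fin 2, coef k (pd j (ρ t)) = 0) ∧ coef k (dvg (u t)) = 0 := by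
    intro k
    have hQ : ∀ t, coef k (dvg (u t)) =
        (-mc (k 0)) * coef k (fun y => u t y 0) + (-mc (k 1)) * coef k (fun y => u t y 1) :=
      fun t => coef_dvg k (hSGu t 0) (hSGu t 1)
    -- derivative of the density mode
    have hda : ∀ t, 0 ≤ t → HasDerivAt (fun s => coef k (fun y => ρ s y))
        (((-((ub 0 : ℂ) * (-mc (k 0)) + (ub 1 : ℂ) * (-mc (k 1)))
            + ((Δt * b₁ : ℝ) : ℂ) * ((ub 0 : ℂ) * (-mc (k 0)) + (ub 1 : ℂ) * (-mc (k 1)))^2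
            + ((Δx₁ * |ub 0| / 2 : ℝ) : ℂ) * (-mc (k 0))^2
            + ((Δx₂ * |ub 1| / 2 : ℝ) : ℂ) * (-mc (k 1))^2
            + ((-mc (k 0))^2 + (-mc (k 1))^2) * ((Δt * (b₃ * (ab ^ 2 / ε ^ 2)) : ℝ) : ℂ))
            * coef k (ρ t)
          + (((-ρb : ℝ) : ℂ) + ((Δt * (b₂ * ρb) : ℝ) : ℂ)
              * ((ub 0 : ℂ) * (-mc (k 0)) + (ub 1 : ℂ) * (-mc (k 1))))
            * ((-mc (k 0)) * coef k (fun y => u t y 0)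
               + (-mc (k 1)) * coef k (fun y => u t y 1)))) t := by
      intro t ht
      have hd := coef_hasDerivAt hGoodR k t
      have hpt : ∀ y, Dt (fun p : W2 => ρ p.1 p.2) (t, y)
          = (Δt * b₁) * adv ub (adv ub (ρ t)) y
            + (Δt * (b₃ * (ab ^ 2 / ε ^ 2))) * lap (ρ t) y
            + (Δt * (b₂ * ρb)) * adv ub (dvg (u t)) y
            + (Δx₁ * |ub 0| / 2) * pd 0 (pd 0 (ρ t)) y
            + (Δx₂ * |ub 1| / 2) * pd 1 (pd 1 (ρ t)) y
            + (-1) * adv ub (ρ t) y + (-ρb) * dvg (u t) y := by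
        intro y
        have h1 := hmass t ht y
        have h2 : deriv (fun s => ρ s y) t = Dt (fun p : W2 => ρ p.1 p.2) (t, y) :=
          deriv_slice hGoodR t y
        rw [h2] at h1
        linarith
      rw [coef_congr k hpt, coef_comb7 k _ _ _ _ _ _ _ _ _ _ _ _ _ _
          ((((hSGρ t).adv ub).adv ub).smooth.continuous)
          ((hSGρ t).lap.smooth.continuous)
          (((hSGdvg t).adv ub).smooth.continuous)
          ((((hSGρ t).pd 0).pd 0).smooth.continuous)
          ((((hSGρ t).pd 1).pd 1).smooth.continuous)
          (((hSGρ t).adv ub).smooth.continuous)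
          ((hSGdvg t).smooth.continuous),
        coef_adv k ub ((hSGρ t).adv ub), coef_adv k ub (hSGρ t), coef_lap k (hSGρ t),
        coef_adv k ub (hSGdvg t), hQ t,
        coef_pd k 0 ((hSGρ t).pd 0), coef_pd k 0 (hSGρ t),
        coef_pd k 1 ((hSGρ t).pd 1), coef_pd k 1 (hSGρ t)] at hd
      convert hd using 1
      push_cast
      ring
    -- derivative of the velocity modes
    have hdb : ∀ (j : Fin 2) (t : ℝ), 0 ≤ t → HasDerivAt (fun s => coef k (fun y => u s y j))
        (((-((ub 0 : ℂ) * (-mc (k 0)) + (ub 1 : ℂ) * (-mc (k 1)))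
            + ((Δt * b₁ : ℝ) : ℂ) * ((ub 0 : ℂ) * (-mc (k 0)) + (ub 1 : ℂ) * (-mc (k 1)))^2
            + ((Δx₁ * |ub 0| / 2 : ℝ) : ℂ) * (-mc (k 0))^2
            + ((Δx₂ * |ub 1| / 2 : ℝ) : ℂ) * (-mc (k 1))^2) * coef k (fun y => u t y j)
          + (-mc (k j)) * ((((-(ab ^ 2 / (ρb * ε ^ 2)) : ℝ) : ℂ)
                + ((Δt * (b₂ * (ab ^ 2 / (ρb * ε ^ 2))) : ℝ) : ℂ)
                  * ((ub 0 : ℂ) * (-mc (k 0)) + (ub 1 : ℂ) * (-mc (k 1)))) * coef k (ρ t)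
              + ((Δt * (b₃ * (ab ^ 2 / ε ^ 2)) : ℝ) : ℂ)
                * ((-mc (k 0)) * coef k (fun y => u t y 0)
                   + (-mc (k 1)) * coef k (fun y => u t y 1))))) t := by
      intro j t ht
      have hd := coef_hasDerivAt (hGoodU j) k t
      have hpt : ∀ y, Dt (fun p : W2 => u p.1 p.2 j) (t, y)
          = (Δt * b₁) * adv ub (adv ub (fun y => u t y j)) y
            + (Δt * (b₃ * (ab ^ 2 / ε ^ 2))) * pd j (dvg (u t)) y
            + (Δt * (b₂ * (ab ^ 2 / (ρb * ε ^ 2)))) * adv ub (pd j (ρ t)) y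
            + (Δx₁ * |ub 0| / 2) * pd 0 (pd 0 (fun y => u t y j)) y
            + (Δx₂ * |ub 1| / 2) * pd 1 (pd 1 (fun y => u t y j)) y
            + (-1) * adv ub (fun y => u t y j) y
            + (-(ab ^ 2 / (ρb * ε ^ 2))) * pd j (ρ t) y := by
        intro y
        have h1 := hmom t ht y j
        have h2 : deriv (fun s => u s y j) t = Dt (fun p : W2 => u p.1 p.2 j) (t, y) :=
          deriv_slice (hGoodU j) t y
        rw [h2] at h1
        linarith
      rw [coef_congr k hpt, coef_comb7 k _ _ _ _ _ _ _ _ _ _ _ _ _ _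
          ((((hSGu t j).adv ub).adv ub).smooth.continuous)
          (((hSGdvg t).pd j).smooth.continuous)
          ((((hSGρ t).pd j).adv ub).smooth.continuous)
          ((((hSGu t j).pd 0).pd 0).smooth.continuous)
          ((((hSGu t j).pd 1).pd 1).smooth.continuous)
          (((hSGu t j).adv ub).smooth.continuous)
          (((hSGρ t).pd j).smooth.continuous),
        coef_adv k ub ((hSGu t j).adv ub), coef_adv k ub (hSGu t j),
        coef_pd k j (hSGdvg t), hQ t,
        coef_adv k ub ((hSGρ t).pd j), coef_pd k j (hSGρ t),
        coef_pd k 0 ((hSGu t j).pd 0), coef_pd k 0 (hSGu t j),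
        coef_pd k 1 ((hSGu t j).pd 1), coef_pd k 1 (hSGu t j)] at hd
      convert hd using 1
      push_cast
      ring
    -- derivative of the divergence mode
    have hdq : ∀ t : ℝ, 0 ≤ t → HasDerivAt
        (fun s => (-mc (k 0)) * coef k (fun y => u s y 0)
          + (-mc (k 1)) * coef k (fun y => u s y 1))
        (((-mc (k 0))^2 + (-mc (k 1))^2)
            * (((-(ab ^ 2 / (ρb * ε ^ 2)) : ℝ) : ℂ)
              + ((Δt * (b₂ * (ab ^ 2 / (ρb * ε ^ 2))) : ℝ) : ℂ)
                * ((ub 0 : ℂ) * (-mc (k 0)) + (ub 1 : ℂ) * (-mc (k 1))))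
            * coef k (ρ t)
          + (-((ub 0 : ℂ) * (-mc (k 0)) + (ub 1 : ℂ) * (-mc (k 1)))
              + ((Δt * b₁ : ℝ) : ℂ) * ((ub 0 : ℂ) * (-mc (k 0)) + (ub 1 : ℂ) * (-mc (k 1)))^2
              + ((Δx₁ * |ub 0| / 2 : ℝ) : ℂ) * (-mc (k 0))^2
              + ((Δx₂ * |ub 1| / 2 : ℝ) : ℂ) * (-mc (k 1))^2
              + ((-mc (k 0))^2 + (-mc (k 1))^2) * ((Δt * (b₃ * (ab ^ 2 / ε ^ 2)) : ℝ) : ℂ))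
            * ((-mc (k 0)) * coef k (fun y => u t y 0)
               + (-mc (k 1)) * coef k (fun y => u t y 1))) t := by
      intro t ht
      have h0 := (hdb 0 t ht).const_mul (-mc (k 0))
      have h1 := (hdb 1 t ht).const_mul (-mc (k 1))
      have hsum := h0.add h1
      exact hsum.congr_deriv (by ring)
    -- continuity of the modes
    have hconta : Continuous (fun s => coef k (fun y => ρ s y)) := by
      have hdiff : Differentiable ℝ (fun s => coef k (fun y => ρ s y)) :=
        fun t' => (coef_hasDerivAt hGoodR k t').differentiableAt
      exact hdiff.continuous
    have hcontb : ∀ j : Fin 2, Continuous (fun s => coef k (fun y => u s y j)) := by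
      intro j
      have hdiff : Differentiable ℝ (fun s => coef k (fun y => u s y j)) :=
        fun t' => (coef_hasDerivAt (hGoodU j) k t').differentiableAt
      exact hdiff.continuous
    have hcontq : Continuous (fun s => (-mc (k 0)) * coef k (fun y => u s y 0)
        + (-mc (k 1)) * coef k (fun y => u s y 1)) :=
      (continuous_const.mul (hcontb 0)).add (continuous_const.mul (hcontb 1))
    -- the ODE argument for nonzero modes
    have hODE : (∃ j : Fin 2, k j ≠ 0) → ∀ t, 0 ≤ t → coef k (ρ t) = 0
        ∧ (-mc (k 0)) * coef k (fun y => u t y 0)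
          + (-mc (k 1)) * coef k (fun y => u t y 1) = 0 := by
      rintro ⟨j₀, hj₀⟩
      have ha0 : coef k (ρ 0) = 0 := by
        have hcp := coef_pd k j₀ (hSGρ 0)
        have hz : ∀ y : V2, pd j₀ (ρ 0) y = (fun _ : V2 => (0:ℝ)) y := by
          intro y
          have hconst : ρ 0 = fun _ : V2 => ρ 0 0 := funext fun z => hρ0 z 0
          rw [hconst]
          exact pd_const _ _ _
        rw [coef_congr k hz, coef_zero] at hcp
        have hne : -mc (k j₀) ≠ 0 := neg_ne_zero.mpr (mc_ne_zero hj₀)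
        exact (mul_eq_zero.mp hcp.symm).resolve_left hne
      have hq0 : (-mc (k 0)) * coef k (fun y => u 0 y 0)
          + (-mc (k 1)) * coef k (fun y => u 0 y 1) = 0 := by
        rw [← hQ 0]
        have hz : ∀ x : V2, dvg (u 0) x = (fun _ : V2 => (0:ℝ)) x := fun x => hu0 x
        rw [coef_congr k hz, coef_zero]
      intro t ht
      exact ode_zero _ _ _ _ _ _ hda hdq hconta hcontq ha0 hq0 t ht
    -- conclusion for each mode
    intro t ht
    constructor
    · intro j
      rw [coef_pd k j (hSGρ t)]
      by_cases hkj : k j = 0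
      · rw [hkj]
        have hmz : mc 0 = 0 := by simp [mc]
        rw [hmz]
        ring
      · rw [(hODE ⟨j, hkj⟩ t ht).1]
        ring
    · rw [hQ t]
      by_cases hk0 : ∃ j : Fin 2, k j ≠ 0
      · exact (hODE hk0 t ht).2
      · push_neg at hk0
        rw [hk0 0, hk0 1]
        have hmz : mc 0 = 0 := by simp [mc]
        rw [hmz]
        ring
  intro t ht
  constructor
  · have hpdzero : ∀ (j : Fin 2) (x : V2), pd j (ρ t) x = 0 := by
      intro j
      exact unique2 ((hSGρ t).pd j).smooth.continuous ((hSGρ t).pd j).per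
        (fun k => (main k t ht).1 j)
    intro x y
    apply is_const_of_fderiv_eq_zero (𝕜 := ℝ) ((hSGρ t).smooth.differentiable (by simp))
    intro z
    ext v
    have hv : v = ∑ i : Fin 2, v i • (Pi.single i (1:ℝ) : V2) := by
      rw [Fin.sum_univ_two]; funext j; fin_cases j <;> simp
    rw [hv, map_sum, Fin.sum_univ_two, map_smul, map_smul]
    have e0 : (fderiv ℝ (ρ t) z) (Pi.single 0 1) = pd 0 (ρ t) z := rfl
    have e1 : (fderiv ℝ (ρ t) z) (Pi.single 1 1) = pd 1 (ρ t) z := rfl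
    rw [e0, e1, hpdzero 0 z, hpdzero 1 z]
    simp
  · exact unique2 (hSGdvg t).smooth.continuous (hSGdvg t).per (fun k => (main k t ht).2)
end

section
/- Let ε, ρ̄, ā, Δt, Δx₁, Δx₂ > 0 and let ū = (ū₁, ū₂) ∈ ℝ² be a constant vector with ū₁ ≠ 0 and ū₂ ≠ 0. Let ρ : [0,∞) × ℝ² → ℝ and u : [0,∞) × ℝ² → ℝ² be smooth, ℤ²-periodic in space, and solve pointwise the modified equation of the first-order Euler(1,1,1) IMEX-RK fully-discrete scheme for the wave equation: ∂_t ρ + ū·∇ρ + ρ̄ (∇·u) = Δt [ −(1/2)(ū·∇)²ρ + (1/2)(ā²/ε²) Δρ ] + (1/2)( Δx₁ |ū₁| ∂²_{x₁} ρ + Δx₂ |ū₂| ∂²_{x₂} ρ ), and ∂_t u + (ū·∇)u + (ā²/(ρ̄ ε²)) ∇ρ = Δt [ −(1/2)(ū·∇)²u + (1/2)(ā²/ε²) ∇(∇·u) ] + (1/2)( Δx₁ |ū₁| ∂²_{x₁} u + Δx₂ |ū₂| ∂²_{x₂} u ). If the timestep satisfies the CFL-like condition Δt ≤ (1/2) ·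 min(|ū₁|, |ū₂|) · min(Δx₁, Δx₂) / (ū₁² + ū₂²), then the energy E(t) := (ā²/(ρ̄ ε²)) ∫_{[0,1]²} ρ(t,x)² dx + ρ̄ ∫_{[0,1]²} |u(t,x)|² dx is nonincreasing in t. In particular, the stability constraint on Δt is independent of ε. -/
open MeasureTheory

open Set

local notation "X2" => Fin 2 → ℝ

-- helper: smoothness of pd
lemma contDiff_pd {f : X2 → ℝ} (hf : ContDiff ℝ (⊤ : ℕ∞) f) (i : Fin 2) :
    ContDiff ℝ (⊤ : ℕ∞) (pd i f) :=
  (hf.fderiv_right (by simp)).clm_apply contDiff_const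

-- periodicity notion
def Per (f : X2 → ℝ) : Prop := ∀ (x : X2) (k : Fin 2 → ℤ), f (fun i => x i + (k i : ℝ)) = f x

lemma Per.add_coe {f : X2 → ℝ} (hf : Per f) (x : X2) (k : Fin 2 → ℤ) :
    f (x + fun i => (k i : ℝ)) = f x := hf x k

lemma per_pd {f : X2 → ℝ} (hf : Differentiable ℝ f) (hp : Per f) (i : Fin 2) :
    Per (pd i f) := by
  intro x k
  have hxk : (fun j => x j + (k j : ℝ)) = x + fun j => (k j : ℝ) := rfl
  have hfun : (fun y : X2 => f (y + fun j => (k j : ℝ))) = f := by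
    funext y; exact hp y k
  have h1 : fderiv ℝ (fun y : X2 => f (y + fun j => (k j : ℝ))) x
      = fderiv ℝ f (x + fun j => (k j : ℝ)) := by
    have := ((hf (x + fun j => (k j : ℝ))).hasFDerivAt.comp x
      ((hasFDerivAt_id x).add_const (fun j => (k j : ℝ))))
    rw [ContinuousLinearMap.comp_id] at this
    exact this.fderiv
  show fderiv ℝ f _ _ = fderiv ℝ f _ _
  rw [hxk, ← h1, hfun]

noncomputable def Q2 : Set X2 := Set.Icc 0 1

lemma integral_pd_zero {g : X2 → ℝ} (hg : ContDiff ℝ (⊤ : ℕ∞) g) (hp : Per g) (i : Fin 2) :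
    ∫ x in Q2, pd i g x = 0 := by
  classical
  have hle : (0 : X2) ≤ 1 := fun _ => zero_le_one
  set f : X2 → (Fin 2 → ℝ) := fun x => Pi.single i (g x) with hf
  set f' : X2 → (X2 →L[ℝ] (Fin 2 → ℝ)) :=
    fun x => ContinuousLinearMap.pi (fun j => if j = i then fderiv ℝ g x else 0) with hf'
  have Hc : ContinuousOn f (Icc 0 1) := by
    apply Continuous.continuousOn
    apply continuous_pi
    intro j
    simp only [hf, Pi.single_apply]
    split
    · exact hg.continuous
    · exact continuous_const
  have Hd : ∀ x ∈ (Set.pi univ fun _ => Ioo (0:ℝ) 1) \ (∅ : Set X2),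
      HasFDerivAt f (f' x) x := by
    intro x _
    rw [hf']
    apply hasFDerivAt_pi.2
    intro j
    rcases eq_or_ne j i with rfl | hne
    · simp only [if_pos rfl]
      have : (fun y : X2 => f y j) = g := by
        funext y; simp [hf]
      rw [this]
      exact (hg.differentiable (by simp) x).hasFDerivAt
    · simp only [if_neg hne]
      have : (fun y : X2 => f y j) = fun _ => (0:ℝ) := by
        funext y; simp [hf, Pi.single_apply, hne]
      rw [this]
      exact hasFDerivAt_const 0 x
  have hdiv : (fun x => ∑ j, f' x (Pi.single j 1) j) = pd i g := by
    funext x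
    rw [Finset.sum_eq_single i]
    · simp [hf', pd]
    · intro j _ hj
      simp [hf', hj]
    · simp
  have Hi : IntegrableOn (fun x => ∑ j, f' x (Pi.single j 1) j) (Icc (0:X2) 1) := by
    rw [hdiv]
    exact ((contDiff_pd hg i).continuous.continuousOn).integrableOn_compact isCompact_Icc
  have := MeasureTheory.integral_divergence_of_hasFDerivAt_off_countable (n := 1) (a := 0) (b := 1) hle f f' ∅
    countable_empty Hc Hd Hi
  rw [hdiv] at this
  rw [Q2, this]
  apply Finset.sum_eq_zero
  intro j _
  rcases eq_or_ne j i with rfl | hne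
  · have hfront : ∀ y : Fin 1 → ℝ,
        f (Fin.insertNth j ((1:X2) j) y) j = f (Fin.insertNth j ((0:X2) j) y) j := by
      intro y
      have key : (Fin.insertNth j (1:ℝ) y : X2) = fun l => (Fin.insertNth j (0:ℝ) y : X2) l
          + ((Pi.single j 1 : Fin 2 → ℤ) l : ℝ) := by
        funext l
        rcases eq_or_ne l j with rfl | hl
        · simp
        · obtain ⟨m, rfl⟩ := Fin.exists_succAbove_eq hl
          simp [Pi.single_apply, (Fin.succAbove_ne j m)]
      simp only [hf, Pi.single_apply, if_pos rfl, Pi.one_apply, Pi.zero_apply]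
      rw [key, hp _ (Pi.single j 1)]
    rw [show (∫ x in Icc ((0:X2) ∘ j.succAbove) ((1:X2) ∘ j.succAbove),
          f (Fin.insertNth j ((1:X2) j) x) j)
        = ∫ x in Icc ((0:X2) ∘ j.succAbove) ((1:X2) ∘ j.succAbove),
          f (Fin.insertNth j ((0:X2) j) x) j from by
      apply setIntegral_congr_fun measurableSet_Icc
      intro y _; exact hfront y]
    ring
  · have : ∀ (c : ℝ) (y : Fin 1 → ℝ), f (Fin.insertNth j c y) j = 0 := by
      intro c y; simp [hf, Pi.single_apply, hne]
    simp [this]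

lemma intQ {f : X2 → ℝ} (hf : Continuous f) : IntegrableOn f Q2 :=
  hf.continuousOn.integrableOn_compact isCompact_Icc

lemma measQ : MeasurableSet Q2 := measurableSet_Icc

lemma per_mul {f g : X2 → ℝ} (hf : Per f) (hg : Per g) : Per (fun x => f x * g x) := by
  intro x k; simp only [hf x k, hg x k]

lemma integral_by_parts {f g : X2 → ℝ} (hf : ContDiff ℝ (⊤ : ℕ∞) f) (hg : ContDiff ℝ (⊤ : ℕ∞) g)
    (hpf : Per f) (hpg : Per g) (i : Fin 2) :
    ∫ x in Q2, f x * pd i g x = - ∫ x in Q2, pd i f x * g x := by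
  have hmul : ContDiff ℝ (⊤ : ℕ∞) (fun x => f x * g x) := hf.mul hg
  have hz := integral_pd_zero hmul (per_mul hpf hpg) i
  have hexp : ∀ x, pd i (fun y => f y * g y) x = f x * pd i g x + pd i f x * g x := by
    intro x
    have := fderiv_fun_mul (𝕜 := ℝ) (hf.differentiable (by simp) x) (hg.differentiable (by simp) x)
    show fderiv ℝ (fun y => f y * g y) x (Pi.single i 1) = _
    rw [this]
    simp [pd]
    ring
  rw [show (fun x => pd i (fun y => f y * g y) x)
      = fun x => f x * pd i g x + pd i f x * g x from funext hexp] at hz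
  have h1 : IntegrableOn (fun x => f x * pd i g x) Q2 :=
    intQ (hf.continuous.mul (contDiff_pd hg i).continuous)
  have h2 : IntegrableOn (fun x => pd i f x * g x) Q2 :=
    intQ ((contDiff_pd hf i).continuous.mul hg.continuous)
  rw [integral_add h1 h2] at hz
  linarith

lemma hasDerivAt_intQ {F G : ℝ → X2 → ℝ}
    (hFc : Continuous (fun p : ℝ × X2 => F p.1 p.2))
    (hGc : Continuous (fun p : ℝ × X2 => G p.1 p.2))
    (hd : ∀ (t : ℝ) (x : X2), HasDerivAt (fun s => F s x) (G t x) t) (t₀ : ℝ) :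
    HasDerivAt (fun t => ∫ x in Q2, F t x) (∫ x in Q2, G t₀ x) t₀ := by
  have hK : IsCompact ((Icc (t₀ - 1) (t₀ + 1)) ×ˢ (Q2 : Set X2)) :=
    isCompact_Icc.prod isCompact_Icc
  obtain ⟨C, hC⟩ := hK.exists_bound_of_continuousOn hGc.continuousOn
  refine (hasDerivAt_integral_of_dominated_loc_of_deriv_le (μ := volume.restrict Q2)
    (F := F) (F' := G) (bound := fun _ => C) (Metric.ball_mem_nhds t₀ one_pos) ?_ ?_ ?_ ?_ ?_ ?_).2
  · filter_upwards with t
    exact (hFc.comp (Continuous.prodMk_right t)).aestronglyMeasurable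
  · exact intQ (hFc.comp (Continuous.prodMk_right t₀))
  · exact (hGc.comp (Continuous.prodMk_right t₀)).aestronglyMeasurable
  · rw [ae_restrict_iff' measQ]
    filter_upwards with x hx
    intro t ht
    have ht' : t ∈ Icc (t₀ - 1) (t₀ + 1) := by
      have := Metric.mem_ball.mp ht
      rw [Real.dist_eq] at this
      have h2 := abs_lt.mp this
      constructor <;> linarith [h2.1, h2.2]
    exact hC (t, x) ⟨ht', hx⟩
  · exact integrableOn_const (isCompact_Icc.measure_lt_top.ne)
  · filter_upwards with x
    intro t _
    exact hd t x

lemma contDiff_adv (w : Fin 2 → ℝ) {f : X2 → ℝ} (hf : ContDiff ℝ (⊤ : ℕ∞) f) :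
    ContDiff ℝ (⊤ : ℕ∞) (adv w f) :=
  ContDiff.sum fun i _ => contDiff_const.mul (contDiff_pd hf i)

lemma per_adv (w : Fin 2 → ℝ) {f : X2 → ℝ} (hf : ContDiff ℝ (⊤ : ℕ∞) f) (hp : Per f) :
    Per (adv w f) := by
  intro x k
  simp only [adv]
  apply Finset.sum_congr rfl
  intro i _
  rw [per_pd (hf.differentiable (by simp)) hp i x k]

lemma per_sum {f g : X2 → ℝ} (hf : Per f) (hg : Per g) : Per (fun x => f x + g x) := by
  intro x k; simp only [hf x k, hg x k]

-- self-adjointness trick: ∫ f ∂ᵢ f = 0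
lemma integral_self_pd {f : X2 → ℝ} (hf : ContDiff ℝ (⊤ : ℕ∞) f) (hp : Per f) (i : Fin 2) :
    ∫ x in Q2, f x * pd i f x = 0 := by
  have h := integral_by_parts hf hf hp hp i
  have : ∫ x in Q2, pd i f x * f x = ∫ x in Q2, f x * pd i f x := by
    apply setIntegral_congr_fun measQ; intro x _; ring
  rw [this] at h
  linarith

-- ∫ f ∂ᵢ∂ᵢ g = -∫ ∂ᵢf ∂ᵢg
lemma integral_second {f g : X2 → ℝ} (hf : ContDiff ℝ (⊤ : ℕ∞) f) (hg : ContDiff ℝ (⊤ : ℕ∞) g)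
    (hpf : Per f) (hpg : Per g) (i : Fin 2) :
    ∫ x in Q2, f x * pd i (pd i g) x = - ∫ x in Q2, pd i f x * pd i g x :=
  integral_by_parts hf (contDiff_pd hg i) hpf (per_pd (hg.differentiable (by simp)) hpg i) i

lemma sq_congr {f : X2 → ℝ} : ∫ x in Q2, f x * f x = ∫ x in Q2, (f x)^2 := by
  apply setIntegral_congr_fun measQ; intro x _; ring

lemma eval_main (w : Fin 2 → ℝ) (Δt d1 d2 : ℝ) {φ χ ψ : X2 → ℝ}
    (hφ : ContDiff ℝ (⊤ : ℕ∞) φ) (hpφ : Per φ) (hχ : Continuous χ) (hψ : Continuous ψ) :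
    ∫ x in Q2, 2 * φ x * (-(adv w φ x) - χ x
        + Δt * (-(1/2) * adv w (adv w φ) x + ψ x)
        + 1/2 * (d1 * pd 0 (pd 0 φ) x + d2 * pd 1 (pd 1 φ) x))
      = -2 * (∫ x in Q2, φ x * χ x)
        + Δt * (∫ x in Q2, (adv w φ x)^2)
        + 2 * Δt * (∫ x in Q2, φ x * ψ x)
        - (d1 * (∫ x in Q2, (pd 0 φ x)^2) + d2 * (∫ x in Q2, (pd 1 φ x)^2)) := by
  have hCa : ContDiff ℝ (⊤ : ℕ∞) (adv w φ) := contDiff_adv w hφ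
  have hPa : Per (adv w φ) := per_adv w hφ hpφ
  have cφ : Continuous φ := hφ.continuous
  have cp : ∀ i, Continuous (pd i φ) := fun i => (contDiff_pd hφ i).continuous
  have cpa : ∀ i, Continuous (pd i (adv w φ)) := fun i => (contDiff_pd hCa i).continuous
  have cpp : ∀ i, Continuous (pd i (pd i φ)) := fun i => (contDiff_pd (contDiff_pd hφ i) i).continuous
  have i1 : IntegrableOn (fun x => φ x * pd 0 φ x) Q2 := intQ (cφ.mul (cp 0))
  have i2 : IntegrableOn (fun x => φ x * pd 1 φ x) Q2 := intQ (cφ.mul (cp 1))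
  have i3 : IntegrableOn (fun x => φ x * χ x) Q2 := intQ (cφ.mul hχ)
  have i3b : IntegrableOn (fun x => φ x * ψ x) Q2 := intQ (cφ.mul hψ)
  have i4 : IntegrableOn (fun x => φ x * pd 0 (adv w φ) x) Q2 := intQ (cφ.mul (cpa 0))
  have i5 : IntegrableOn (fun x => φ x * pd 1 (adv w φ) x) Q2 := intQ (cφ.mul (cpa 1))
  have i6 : IntegrableOn (fun x => φ x * pd 0 (pd 0 φ) x) Q2 := intQ (cφ.mul (cpp 0))
  have i7 : IntegrableOn (fun x => φ x * pd 1 (pd 1 φ) x) Q2 := intQ (cφ.mul (cpp 1))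
  have hexp : (fun x => 2 * φ x * (-(adv w φ x) - χ x
        + Δt * (-(1/2) * adv w (adv w φ) x + ψ x)
        + 1/2 * (d1 * pd 0 (pd 0 φ) x + d2 * pd 1 (pd 1 φ) x)))
      = fun x => (-2*w 0) * (φ x * pd 0 φ x) + (-2*w 1) * (φ x * pd 1 φ x)
        + (-2:ℝ) * (φ x * χ x) + (2*Δt) * (φ x * ψ x)
        + (-Δt * w 0) * (φ x * pd 0 (adv w φ) x)
        + (-Δt * w 1) * (φ x * pd 1 (adv w φ) x)
        + d1 * (φ x * pd 0 (pd 0 φ) x)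
        + d2 * (φ x * pd 1 (pd 1 φ) x) := by
    funext x
    simp only [adv, lap, Fin.sum_univ_two]
    ring
  rw [hexp]
  have g1 : IntegrableOn (fun x => (-2*w 0) * (φ x * pd 0 φ x)) Q2 := i1.const_mul _
  have g2 : IntegrableOn (fun x => (-2*w 1) * (φ x * pd 1 φ x)) Q2 := i2.const_mul _
  have g3 : IntegrableOn (fun x => (-2:ℝ) * (φ x * χ x)) Q2 := i3.const_mul _
  have g3b : IntegrableOn (fun x => (2*Δt) * (φ x * ψ x)) Q2 := i3b.const_mul _
  have g4 : IntegrableOn (fun x => (-Δt * w 0) * (φ x * pd 0 (adv w φ) x)) Q2 := i4.const_mul _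
  have g5 : IntegrableOn (fun x => (-Δt * w 1) * (φ x * pd 1 (adv w φ) x)) Q2 := i5.const_mul _
  have g6 : IntegrableOn (fun x => d1 * (φ x * pd 0 (pd 0 φ) x)) Q2 := i6.const_mul _
  have g7 : IntegrableOn (fun x => d2 * (φ x * pd 1 (pd 1 φ) x)) Q2 := i7.const_mul _
  have G2 : IntegrableOn (fun x => (-2*w 0) * (φ x * pd 0 φ x) + (-2*w 1) * (φ x * pd 1 φ x)) Q2 := g1.add g2
  have G3 : IntegrableOn (fun x => (-2*w 0) * (φ x * pd 0 φ x) + (-2*w 1) * (φ x * pd 1 φ x) + (-2:ℝ) * (φ x * χ x)) Q2 := G2.add g3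
  have G3b : IntegrableOn (fun x => (-2*w 0) * (φ x * pd 0 φ x) + (-2*w 1) * (φ x * pd 1 φ x) + (-2:ℝ) * (φ x * χ x) + (2*Δt) * (φ x * ψ x)) Q2 := G3.add g3b
  have G4 : IntegrableOn (fun x => (-2*w 0) * (φ x * pd 0 φ x) + (-2*w 1) * (φ x * pd 1 φ x) + (-2:ℝ) * (φ x * χ x) + (2*Δt) * (φ x * ψ x) + (-Δt * w 0) * (φ x * pd 0 (adv w φ) x)) Q2 := G3b.add g4
  have G5 : IntegrableOn (fun x => (-2*w 0) * (φ x * pd 0 φ x) + (-2*w 1) * (φ x * pd 1 φ x) + (-2:ℝ) * (φ x * χ x) + (2*Δt) * (φ x * ψ x) + (-Δt * w 0) * (φ x * pd 0 (adv w φ) x) + (-Δt * w 1) * (φ x * pd 1 (adv w φ) x)) Q2 := G4.add g5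
  have G6 : IntegrableOn (fun x => (-2*w 0) * (φ x * pd 0 φ x) + (-2*w 1) * (φ x * pd 1 φ x) + (-2:ℝ) * (φ x * χ x) + (2*Δt) * (φ x * ψ x) + (-Δt * w 0) * (φ x * pd 0 (adv w φ) x) + (-Δt * w 1) * (φ x * pd 1 (adv w φ) x) + d1 * (φ x * pd 0 (pd 0 φ) x)) Q2 := G5.add g6
  rw [integral_add G6 g7, integral_add G5 g6, integral_add G4 g5, integral_add G3b g4,
      integral_add G3 g3b, integral_add G2 g3, integral_add g1 g2]
  rw [integral_const_mul, integral_const_mul, integral_const_mul, integral_const_mul,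
      integral_const_mul, integral_const_mul, integral_const_mul, integral_const_mul]
  rw [integral_self_pd hφ hpφ 0, integral_self_pd hφ hpφ 1]
  rw [integral_by_parts hφ hCa hpφ hPa 0, integral_by_parts hφ hCa hpφ hPa 1]
  rw [integral_second hφ hφ hpφ hpφ 0, integral_second hφ hφ hpφ hpφ 1]
  rw [sq_congr (f := pd 0 φ), sq_congr (f := pd 1 φ)]
  have hadv : (w 0) * (∫ x in Q2, pd 0 φ x * adv w φ x)
      + (w 1) * (∫ x in Q2, pd 1 φ x * adv w φ x)
      = ∫ x in Q2, (adv w φ x)^2 := by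
    rw [← integral_const_mul, ← integral_const_mul,
      ← integral_add (((intQ (f := fun x => pd 0 φ x * adv w φ x) ((cp 0).mul hCa.continuous))).const_mul _)
        (((intQ (f := fun x => pd 1 φ x * adv w φ x) ((cp 1).mul hCa.continuous))).const_mul _)]
    apply setIntegral_congr_fun measQ
    intro x _
    simp only [adv, Fin.sum_univ_two]
    ring
  linear_combination Δt * hadv

lemma timeDeriv {f : ℝ → X2 → ℝ} (hf : ContDiff ℝ (⊤ : ℕ∞) (fun p : ℝ × X2 => f p.1 p.2))
    (t : ℝ) (x : X2) :
    HasDerivAt (fun s => f s x)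
      (fderiv ℝ (fun p : ℝ × X2 => f p.1 p.2) (t, x) ((1 : ℝ), (0 : X2))) t := by
  have h := (hf.differentiable (by simp) (t, x)).hasFDerivAt
  have hline : HasDerivAt (fun s : ℝ => ((s, x) : ℝ × X2)) ((1:ℝ), (0:X2)) t :=
    (hasDerivAt_id t).prodMk (hasDerivAt_const t x)
  exact h.comp_hasDerivAt t hline

lemma timeDerivCont {f : ℝ → X2 → ℝ} (hf : ContDiff ℝ (⊤ : ℕ∞) (fun p : ℝ × X2 => f p.1 p.2)) :
    Continuous (fun p : ℝ × X2 =>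
      fderiv ℝ (fun q : ℝ × X2 => f q.1 q.2) (p.1, p.2) ((1 : ℝ), (0 : X2))) := by
  have h1 : ContDiff ℝ (⊤ : ℕ∞) (fderiv ℝ (fun q : ℝ × X2 => f q.1 q.2)) := hf.fderiv_right (by simp)
  have h2 : ContDiff ℝ (⊤ : ℕ∞) (fun p : ℝ × X2 =>
      fderiv ℝ (fun q : ℝ × X2 => f q.1 q.2) p ((1:ℝ), (0:X2))) := h1.clm_apply contDiff_const
  exact h2.continuous

lemma int_comm {f g : X2 → ℝ} : ∫ x in Q2, f x * g x = ∫ x in Q2, g x * f x := by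
  apply setIntegral_congr_fun measQ; intro x _; ring

lemma coupling {r v0 v1 : X2 → ℝ} (hr : ContDiff ℝ (⊤ : ℕ∞) r) (hv0 : ContDiff ℝ (⊤ : ℕ∞) v0)
    (hv1 : ContDiff ℝ (⊤ : ℕ∞) v1) (hpr : Per r) (hpv0 : Per v0) (hpv1 : Per v1) :
    ∫ x in Q2, r x * (pd 0 v0 x + pd 1 v1 x)
      = -(∫ x in Q2, v0 x * pd 0 r x) - ∫ x in Q2, v1 x * pd 1 r x := by
  have h1 : IntegrableOn (fun x => r x * pd 0 v0 x) Q2 :=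
    intQ (hr.continuous.mul (contDiff_pd hv0 0).continuous)
  have h2 : IntegrableOn (fun x => r x * pd 1 v1 x) Q2 :=
    intQ (hr.continuous.mul (contDiff_pd hv1 1).continuous)
  have hsplit : ∫ x in Q2, r x * (pd 0 v0 x + pd 1 v1 x)
      = (∫ x in Q2, r x * pd 0 v0 x) + ∫ x in Q2, r x * pd 1 v1 x := by
    rw [← integral_add h1 h2]
    apply setIntegral_congr_fun measQ; intro x _; ring
  rw [hsplit, integral_by_parts hr hv0 hpr hpv0 0, integral_by_parts hr hv1 hpr hpv1 1,
    int_comm (f := pd 0 r) (g := v0), int_comm (f := pd 1 r) (g := v1)]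
  ring

lemma integral_sq_nonneg (f : X2 → ℝ) : 0 ≤ ∫ x in Q2, (f x)^2 :=
  setIntegral_nonneg measQ (fun x _ => sq_nonneg _)

lemma adv_sq_bound (w : Fin 2 → ℝ) {f : X2 → ℝ} (hf : ContDiff ℝ (⊤ : ℕ∞) f) :
    ∫ x in Q2, (adv w f x)^2
      ≤ (w 0^2 + w 1^2) * ((∫ x in Q2, (pd 0 f x)^2) + ∫ x in Q2, (pd 1 f x)^2) := by
  have h1 : IntegrableOn (fun x => (adv w f x)^2) Q2 :=
    intQ ((contDiff_adv w hf).continuous.pow 2)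
  have h2 : IntegrableOn (fun x => (w 0^2 + w 1^2) * ((pd 0 f x)^2 + (pd 1 f x)^2)) Q2 :=
    intQ (continuous_const.mul (((contDiff_pd hf 0).continuous.pow 2).add
      ((contDiff_pd hf 1).continuous.pow 2)))
  have hmono : ∫ x in Q2, (adv w f x)^2
      ≤ ∫ x in Q2, (w 0^2 + w 1^2) * ((pd 0 f x)^2 + (pd 1 f x)^2) := by
    apply setIntegral_mono_on h1 h2 measQ
    intro x _
    simp only [adv, Fin.sum_univ_two]
    nlinarith [sq_nonneg (w 0 * pd 1 f x - w 1 * pd 0 f x)]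
  calc ∫ x in Q2, (adv w f x)^2
      ≤ ∫ x in Q2, (w 0^2 + w 1^2) * ((pd 0 f x)^2 + (pd 1 f x)^2) := hmono
    _ = (w 0^2 + w 1^2) * ((∫ x in Q2, (pd 0 f x)^2) + ∫ x in Q2, (pd 1 f x)^2) := by
        rw [integral_const_mul, integral_add (intQ (f := fun x => (pd 0 f x)^2) ((contDiff_pd hf 0).continuous.pow 2))
          (intQ (f := fun x => (pd 1 f x)^2) ((contDiff_pd hf 1).continuous.pow 2))]

lemma contDiff_slice {f : ℝ → X2 → ℝ} (h : ContDiff ℝ (⊤ : ℕ∞) (fun p : ℝ × X2 => f p.1 p.2))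
    (t : ℝ) : ContDiff ℝ (⊤ : ℕ∞) (f t) := h.comp (contDiff_const.prodMk contDiff_id)

lemma lap_eval {f : X2 → ℝ} (hf : ContDiff ℝ (⊤ : ℕ∞) f) (hp : Per f) :
    ∫ x in Q2, f x * lap f x
      = -((∫ x in Q2, (pd 0 f x)^2) + ∫ x in Q2, (pd 1 f x)^2) := by
  have i1 : IntegrableOn (fun x => f x * pd 0 (pd 0 f) x) Q2 :=
    intQ (hf.continuous.mul (contDiff_pd (contDiff_pd hf 0) 0).continuous)
  have i2 : IntegrableOn (fun x => f x * pd 1 (pd 1 f) x) Q2 :=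
    intQ (hf.continuous.mul (contDiff_pd (contDiff_pd hf 1) 1).continuous)
  have hsplit : ∫ x in Q2, f x * lap f x
      = (∫ x in Q2, f x * pd 0 (pd 0 f) x) + ∫ x in Q2, f x * pd 1 (pd 1 f) x := by
    rw [← integral_add i1 i2]
    apply setIntegral_congr_fun measQ
    intro x _
    simp only [lap, Fin.sum_univ_two]
    ring
  rw [hsplit, integral_second hf hf hp hp 0, integral_second hf hf hp hp 1,
    sq_congr (f := pd 0 f), sq_congr (f := pd 1 f)]
  ring

lemma dvg_eval {v0 v1 : X2 → ℝ} (hv0 : ContDiff ℝ (⊤ : ℕ∞) v0) (hv1 : ContDiff ℝ (⊤ : ℕ∞) v1)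
    (hp0 : Per v0) (hp1 : Per v1) :
    (∫ x in Q2, v0 x * pd 0 (fun y => pd 0 v0 y + pd 1 v1 y) x)
      + (∫ x in Q2, v1 x * pd 1 (fun y => pd 0 v0 y + pd 1 v1 y) x)
      = -(∫ x in Q2, (pd 0 v0 x + pd 1 v1 x)^2) := by
  have hD : ContDiff ℝ (⊤ : ℕ∞) (fun y => pd 0 v0 y + pd 1 v1 y) :=
    (contDiff_pd hv0 0).add (contDiff_pd hv1 1)
  have hDp : Per (fun y => pd 0 v0 y + pd 1 v1 y) :=
    per_sum (per_pd (hv0.differentiable (by simp)) hp0 0) (per_pd (hv1.differentiable (by simp)) hp1 1)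
  rw [integral_by_parts hv0 hD hp0 hDp 0, integral_by_parts hv1 hD hp1 hDp 1]
  have i1 : IntegrableOn (fun x => pd 0 v0 x * (pd 0 v0 x + pd 1 v1 x)) Q2 :=
    intQ ((contDiff_pd hv0 0).continuous.mul hD.continuous)
  have i2 : IntegrableOn (fun x => pd 1 v1 x * (pd 0 v0 x + pd 1 v1 x)) Q2 :=
    intQ ((contDiff_pd hv1 1).continuous.mul hD.continuous)
  rw [← neg_add, ← integral_add i1 i2]
  congr 1
  apply setIntegral_congr_fun measQ
  intro x _
  ring

lemma cont_shape (w : Fin 2 → ℝ) (Δt d1 d2 : ℝ) {φ χ ψ : X2 → ℝ}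
    (hφ : ContDiff ℝ (⊤ : ℕ∞) φ) (hχ : Continuous χ) (hψ : Continuous ψ) :
    Continuous (fun x => 2 * φ x * (-(adv w φ x) - χ x
        + Δt * (-(1/2) * adv w (adv w φ) x + ψ x)
        + 1/2 * (d1 * pd 0 (pd 0 φ) x + d2 * pd 1 (pd 1 φ) x))) := by
  have c1 : Continuous (adv w φ) := (contDiff_adv w hφ).continuous
  have c2 : Continuous (adv w (adv w φ)) := (contDiff_adv w (contDiff_adv w hφ)).continuous
  have c3 : Continuous (pd 0 (pd 0 φ)) := (contDiff_pd (contDiff_pd hφ 0) 0).continuous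
  have c4 : Continuous (pd 1 (pd 1 φ)) := (contDiff_pd (contDiff_pd hφ 1) 1).continuous
  exact (continuous_const.mul hφ.continuous).mul
    (((c1.neg.sub hχ).add
      (continuous_const.mul ((continuous_const.mul c2).add hψ))).add
      (continuous_const.mul ((continuous_const.mul c3).add (continuous_const.mul c4))))

set_option maxHeartbeats 2000000 in
/-- Theorem 6.2 specialised to the Euler(1,1,1) IMEX scheme: under the CFL-like
condition `Δt ≤ (1/2)·min(|ū₁|,|ū₂|)·min(Δx₁,Δx₂)/(ū₁²+ū₂²)` (independent of `ε`),
solutions of the modified equation of the first-order fully-discrete scheme are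
energy-dissipative: the total energy is nonincreasing in time on `[0,∞)`. -/
theorem stmt_6 (ε ρb ab Δt Δx₁ Δx₂ : ℝ)
    (hε : 0 < ε) (hρb : 0 < ρb) (hab : 0 < ab) (hΔt : 0 < Δt)
    (hΔx₁ : 0 < Δx₁) (hΔx₂ : 0 < Δx₂)
    (ub : Fin 2 → ℝ) (hub1 : ub 0 ≠ 0) (hub2 : ub 1 ≠ 0)
    (ρ : ℝ → (Fin 2 → ℝ) → ℝ) (u : ℝ → (Fin 2 → ℝ) → Fin 2 → ℝ)
    (hρC : ContDiff ℝ (⊤ : ℕ∞) (fun p : ℝ × (Fin 2 → ℝ) => ρ p.1 p.2))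
    (huC : ContDiff ℝ (⊤ : ℕ∞) (fun p : ℝ × (Fin 2 → ℝ) => u p.1 p.2))
    (hρper : ∀ (t : ℝ) (x : Fin 2 → ℝ) (k : Fin 2 → ℤ),
      ρ t (fun i => x i + (k i : ℝ)) = ρ t x)
    (huper : ∀ (t : ℝ) (x : Fin 2 → ℝ) (k : Fin 2 → ℤ),
      u t (fun i => x i + (k i : ℝ)) = u t x)
    (hmass : ∀ (t : ℝ), 0 ≤ t → ∀ (x : Fin 2 → ℝ),
      deriv (fun s => ρ s x) t + adv ub (ρ t) x + ρb * dvg (u t) x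
        = Δt * (-(1 / 2) * adv ub (adv ub (ρ t)) x
              + (1 / 2) * (ab ^ 2 / ε ^ 2) * lap (ρ t) x)
          + (1 / 2) * (Δx₁ * |ub 0| * pd 0 (pd 0 (ρ t)) x
              + Δx₂ * |ub 1| * pd 1 (pd 1 (ρ t)) x))
    (hmom : ∀ (t : ℝ), 0 ≤ t → ∀ (x : Fin 2 → ℝ) (j : Fin 2),
      deriv (fun s => u s x j) t + adv ub (fun y => u t y j) x
          + (ab ^ 2 / (ρb * ε ^ 2)) * pd j (ρ t) x
        = Δt * (-(1 / 2) * adv ub (adv ub (fun y => u t y j)) x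
              + (1 / 2) * (ab ^ 2 / ε ^ 2) * pd j (dvg (u t)) x)
          + (1 / 2) * (Δx₁ * |ub 0| * pd 0 (pd 0 (fun y => u t y j)) x
              + Δx₂ * |ub 1| * pd 1 (pd 1 (fun y => u t y j)) x))
    (hCFL : Δt ≤ (1 / 2) * min |ub 0| |ub 1| * min Δx₁ Δx₂
        / ((ub 0) ^ 2 + (ub 1) ^ 2)) :
    AntitoneOn
      (fun t =>
        (ab ^ 2 / (ρb * ε ^ 2)) *
            (∫ x in Set.pi Set.univ fun _ : Fin 2 => Set.Icc (0 : ℝ) 1, (ρ t x) ^ 2)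
          + ρb * (∫ x in Set.pi Set.univ fun _ : Fin 2 => Set.Icc (0 : ℝ) 1,
              ∑ i, (u t x i) ^ 2))
      (Set.Ici (0 : ℝ)) := by
  have hQ : (Set.pi Set.univ fun _ : Fin 2 => Set.Icc (0 : ℝ) 1) = Q2 := Set.pi_univ_Icc 0 1
  have huCi : ∀ i : Fin 2, ContDiff ℝ (⊤ : ℕ∞) (fun p : ℝ × (Fin 2 → ℝ) => u p.1 p.2 i) :=
    fun i => contDiff_pi.mp huC i
  have hrt : ∀ t : ℝ, ContDiff ℝ (⊤ : ℕ∞) (ρ t) := fun t => contDiff_slice hρC t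
  have hvt : ∀ (t : ℝ) (i : Fin 2), ContDiff ℝ (⊤ : ℕ∞) (fun y => u t y i) :=
    fun t i => contDiff_slice (f := fun t y => u t y i) (huCi i) t
  have hprt : ∀ t, Per (ρ t) := fun t x k => hρper t x k
  have hpvt : ∀ (t : ℝ) (i : Fin 2), Per (fun y => u t y i) :=
    fun t i x k => congrFun (huper t x k) i
  set c := ab ^ 2 / (ρb * ε ^ 2) with hcdef
  set Kc := ab ^ 2 / ε ^ 2 with hKdef
  set d1 := Δx₁ * |ub 0| with hd1def
  set d2 := Δx₂ * |ub 1| with hd2def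
  have hc : 0 < c := by positivity
  have hK : 0 < Kc := by positivity
  have hd1 : 0 < d1 := by
    rw [hd1def]; exact mul_pos hΔx₁ (abs_pos.mpr hub1)
  have hd2 : 0 < d2 := by
    rw [hd2def]; exact mul_pos hΔx₂ (abs_pos.mpr hub2)
  set Dρ : ℝ → (Fin 2 → ℝ) → ℝ :=
    fun t x => fderiv ℝ (fun p : ℝ × (Fin 2 → ℝ) => ρ p.1 p.2) (t, x)
      ((1:ℝ), (0 : Fin 2 → ℝ)) with hDρdef
  set Du : Fin 2 → ℝ → (Fin 2 → ℝ) → ℝ :=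
    fun i t x => fderiv ℝ (fun p : ℝ × (Fin 2 → ℝ) => u p.1 p.2 i) (t, x)
      ((1:ℝ), (0 : Fin 2 → ℝ)) with hDudef
  have hDρd : ∀ (t : ℝ) (x : Fin 2 → ℝ), HasDerivAt (fun s => ρ s x) (Dρ t x) t :=
    fun t x => timeDeriv hρC t x
  have hDud : ∀ (i : Fin 2) (t : ℝ) (x : Fin 2 → ℝ),
      HasDerivAt (fun s => u s x i) (Du i t x) t := fun i t x => timeDeriv (f := fun t y => u t y i) (huCi i) t x
  have hDρc : Continuous (fun p : ℝ × (Fin 2 → ℝ) => Dρ p.1 p.2) := timeDerivCont hρC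
  have hDuc : ∀ i : Fin 2, Continuous (fun p : ℝ × (Fin 2 → ℝ) => Du i p.1 p.2) :=
    fun i => timeDerivCont (f := fun t y => u t y i) (huCi i)
  -- energy function and its derivative
  set E : ℝ → ℝ := fun t => c * (∫ x in Q2, ρ t x * ρ t x)
      + ρb * (∫ x in Q2, (u t x 0 * u t x 0 + u t x 1 * u t x 1)) with hEdef
  have hEρ : ∀ t₀ : ℝ, HasDerivAt (fun t => ∫ x in Q2, ρ t x * ρ t x)
      (∫ x in Q2, (Dρ t₀ x * ρ t₀ x + ρ t₀ x * Dρ t₀ x)) t₀ := by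
    intro t₀
    refine hasDerivAt_intQ (F := fun t x => ρ t x * ρ t x)
      (G := fun t x => Dρ t x * ρ t x + ρ t x * Dρ t x) ?_ ?_ ?_ t₀
    · exact hρC.continuous.mul hρC.continuous
    · exact (hDρc.mul hρC.continuous).add (hρC.continuous.mul hDρc)
    · intro t x; exact (hDρd t x).mul (hDρd t x)
  have hEu : ∀ t₀ : ℝ, HasDerivAt
      (fun t => ∫ x in Q2, (u t x 0 * u t x 0 + u t x 1 * u t x 1))
      (∫ x in Q2, ((Du 0 t₀ x * u t₀ x 0 + u t₀ x 0 * Du 0 t₀ x)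
        + (Du 1 t₀ x * u t₀ x 1 + u t₀ x 1 * Du 1 t₀ x))) t₀ := by
    intro t₀
    refine hasDerivAt_intQ (F := fun t x => u t x 0 * u t x 0 + u t x 1 * u t x 1)
      (G := fun t x => (Du 0 t x * u t x 0 + u t x 0 * Du 0 t x)
        + (Du 1 t x * u t x 1 + u t x 1 * Du 1 t x)) ?_ ?_ ?_ t₀
    · exact ((huCi 0).continuous.mul (huCi 0).continuous).add
        ((huCi 1).continuous.mul (huCi 1).continuous)
    · exact (((hDuc 0).mul (huCi 0).continuous).add ((huCi 0).continuous.mul (hDuc 0))).add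
        (((hDuc 1).mul (huCi 1).continuous).add ((huCi 1).continuous.mul (hDuc 1)))
    · intro t x
      exact ((hDud 0 t x).mul (hDud 0 t x)).add ((hDud 1 t x).mul (hDud 1 t x))
  have hE : ∀ t₀ : ℝ, HasDerivAt E
      (c * (∫ x in Q2, (Dρ t₀ x * ρ t₀ x + ρ t₀ x * Dρ t₀ x))
        + ρb * (∫ x in Q2, ((Du 0 t₀ x * u t₀ x 0 + u t₀ x 0 * Du 0 t₀ x)
          + (Du 1 t₀ x * u t₀ x 1 + u t₀ x 1 * Du 1 t₀ x)))) t₀ := by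
    intro t₀
    exact ((hEρ t₀).const_mul c).add ((hEu t₀).const_mul ρb)
  have hS2 : (0:ℝ) < ub 0 ^ 2 + ub 1 ^ 2 := by positivity
  have key : ∀ t : ℝ, 0 ≤ t →
      c * (∫ x in Q2, (Dρ t x * ρ t x + ρ t x * Dρ t x))
        + ρb * (∫ x in Q2, ((Du 0 t x * u t x 0 + u t x 0 * Du 0 t x)
          + (Du 1 t x * u t x 1 + u t x 1 * Du 1 t x))) ≤ 0 := by
    intro t ht
    have hdvg_eq : dvg (u t)
        = fun y => pd 0 (fun z => u t z 0) y + pd 1 (fun z => u t z 1) y := by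
      funext y; simp [dvg, Fin.sum_univ_two]
    have hdvgCD : ContDiff ℝ (⊤ : ℕ∞) (dvg (u t)) := by
      rw [hdvg_eq]; exact (contDiff_pd (hvt t 0) 0).add (contDiff_pd (hvt t 1) 1)
    have cdvg : Continuous (dvg (u t)) := hdvgCD.continuous
    have lapc : Continuous (lap (ρ t)) := by
      have h : lap (ρ t) = fun x => pd 0 (pd 0 (ρ t)) x + pd 1 (pd 1 (ρ t)) x := by
        funext x; simp [lap, Fin.sum_univ_two]
      rw [h]
      exact ((contDiff_pd (contDiff_pd (hrt t) 0) 0).continuous).add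
        ((contDiff_pd (contDiff_pd (hrt t) 1) 1).continuous)
    -- mass equation evaluation
    have hmassEq : ∫ x in Q2, (Dρ t x * ρ t x + ρ t x * Dρ t x)
        = -2 * (∫ x in Q2, ρ t x * (ρb * dvg (u t) x))
          + Δt * (∫ x in Q2, (adv ub (ρ t) x)^2)
          + 2 * Δt * (∫ x in Q2, ρ t x * (1/2 * Kc * lap (ρ t) x))
          - (d1 * (∫ x in Q2, (pd 0 (ρ t) x)^2) + d2 * (∫ x in Q2, (pd 1 (ρ t) x)^2)) := by
      rw [setIntegral_congr_fun (f := fun x => Dρ t x * ρ t x + ρ t x * Dρ t x)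
        (g := fun x => 2 * ρ t x * (-(adv ub (ρ t) x)
            - (ρb * dvg (u t) x)
            + Δt * (-(1/2) * adv ub (adv ub (ρ t)) x + (1/2 * Kc * lap (ρ t) x))
            + 1/2 * (d1 * pd 0 (pd 0 (ρ t)) x + d2 * pd 1 (pd 1 (ρ t)) x))) measQ
        (fun x _ => by
          have hm := hmass t ht x
          rw [(hDρd t x).deriv] at hm
          linear_combination (2 * ρ t x) * hm)]
      exact eval_main ub Δt d1 d2 (χ := fun x => ρb * dvg (u t) x)
        (ψ := fun x => 1/2 * Kc * lap (ρ t) x) (hrt t) (hprt t)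
        (continuous_const.mul cdvg) (continuous_const.mul lapc)
    have hlapint : ∫ x in Q2, ρ t x * (1/2 * Kc * lap (ρ t) x)
        = 1/2 * Kc * -((∫ x in Q2, (pd 0 (ρ t) x)^2) + ∫ x in Q2, (pd 1 (ρ t) x)^2) := by
      rw [← lap_eval (hrt t) (hprt t), ← integral_const_mul]
      apply setIntegral_congr_fun measQ
      intro x _; ring
    -- coupling
    have hcoup0 := coupling (hrt t) (hvt t 0) (hvt t 1) (hprt t) (hpvt t 0) (hpvt t 1)
    have hcoup : ∫ x in Q2, ρ t x * (ρb * dvg (u t) x)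
        = ρb * (-(∫ x in Q2, u t x 0 * pd 0 (ρ t) x)
            - ∫ x in Q2, u t x 1 * pd 1 (ρ t) x) := by
      rw [← hcoup0, ← integral_const_mul]
      apply setIntegral_congr_fun measQ
      intro x _
      rw [hdvg_eq]
      ring
    -- momentum equation evaluation
    have cχ0 : Continuous (fun x => c * pd 0 (ρ t) x) :=
      continuous_const.mul (contDiff_pd (hrt t) 0).continuous
    have cχ1 : Continuous (fun x => c * pd 1 (ρ t) x) :=
      continuous_const.mul (contDiff_pd (hrt t) 1).continuous
    have cψ0 : Continuous (fun x => 1/2 * Kc * pd 0 (dvg (u t)) x) :=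
      continuous_const.mul (contDiff_pd hdvgCD 0).continuous
    have cψ1 : Continuous (fun x => 1/2 * Kc * pd 1 (dvg (u t)) x) :=
      continuous_const.mul (contDiff_pd hdvgCD 1).continuous
    have iT0 : IntegrableOn (fun x => 2 * u t x 0 * (-(adv ub (fun y => u t y 0) x)
          - (c * pd 0 (ρ t) x)
          + Δt * (-(1/2) * adv ub (adv ub (fun y => u t y 0)) x
              + (1/2 * Kc * pd 0 (dvg (u t)) x))
          + 1/2 * (d1 * pd 0 (pd 0 (fun y => u t y 0)) x
              + d2 * pd 1 (pd 1 (fun y => u t y 0)) x))) Q2 :=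
      intQ (cont_shape ub Δt d1 d2 (hvt t 0) cχ0 cψ0)
    have iT1 : IntegrableOn (fun x => 2 * u t x 1 * (-(adv ub (fun y => u t y 1) x)
          - (c * pd 1 (ρ t) x)
          + Δt * (-(1/2) * adv ub (adv ub (fun y => u t y 1)) x
              + (1/2 * Kc * pd 1 (dvg (u t)) x))
          + 1/2 * (d1 * pd 0 (pd 0 (fun y => u t y 1)) x
              + d2 * pd 1 (pd 1 (fun y => u t y 1)) x))) Q2 :=
      intQ (cont_shape ub Δt d1 d2 (hvt t 1) cχ1 cψ1)
    have hmomEq : ∫ x in Q2, ((Du 0 t x * u t x 0 + u t x 0 * Du 0 t x)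
          + (Du 1 t x * u t x 1 + u t x 1 * Du 1 t x))
        = (-2 * (∫ x in Q2, u t x 0 * (c * pd 0 (ρ t) x))
            + Δt * (∫ x in Q2, (adv ub (fun y => u t y 0) x)^2)
            + 2 * Δt * (∫ x in Q2, u t x 0 * (1/2 * Kc * pd 0 (dvg (u t)) x))
            - (d1 * (∫ x in Q2, (pd 0 (fun y => u t y 0) x)^2)
               + d2 * (∫ x in Q2, (pd 1 (fun y => u t y 0) x)^2)))
          + (-2 * (∫ x in Q2, u t x 1 * (c * pd 1 (ρ t) x))
            + Δt * (∫ x in Q2, (adv ub (fun y => u t y 1) x)^2)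
            + 2 * Δt * (∫ x in Q2, u t x 1 * (1/2 * Kc * pd 1 (dvg (u t)) x))
            - (d1 * (∫ x in Q2, (pd 0 (fun y => u t y 1) x)^2)
               + d2 * (∫ x in Q2, (pd 1 (fun y => u t y 1) x)^2))) := by
      rw [setIntegral_congr_fun (f := fun x => (Du 0 t x * u t x 0 + u t x 0 * Du 0 t x)
            + (Du 1 t x * u t x 1 + u t x 1 * Du 1 t x))
        (g := fun x => 2 * u t x 0 * (-(adv ub (fun y => u t y 0) x)
            - (c * pd 0 (ρ t) x)
            + Δt * (-(1/2) * adv ub (adv ub (fun y => u t y 0)) x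
                + (1/2 * Kc * pd 0 (dvg (u t)) x))
            + 1/2 * (d1 * pd 0 (pd 0 (fun y => u t y 0)) x
                + d2 * pd 1 (pd 1 (fun y => u t y 0)) x))
          + 2 * u t x 1 * (-(adv ub (fun y => u t y 1) x)
            - (c * pd 1 (ρ t) x)
            + Δt * (-(1/2) * adv ub (adv ub (fun y => u t y 1)) x
                + (1/2 * Kc * pd 1 (dvg (u t)) x))
            + 1/2 * (d1 * pd 0 (pd 0 (fun y => u t y 1)) x
                + d2 * pd 1 (pd 1 (fun y => u t y 1)) x))) measQ
        (fun x _ => by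
          have hm0 := hmom t ht x 0
          have hm1 := hmom t ht x 1
          rw [(hDud 0 t x).deriv] at hm0
          rw [(hDud 1 t x).deriv] at hm1
          linear_combination (2 * u t x 0) * hm0 + (2 * u t x 1) * hm1),
        integral_add iT0 iT1]
      congr 1
      · exact eval_main ub Δt d1 d2 (χ := fun x => c * pd 0 (ρ t) x)
          (ψ := fun x => 1/2 * Kc * pd 0 (dvg (u t)) x) (hvt t 0) (hpvt t 0) cχ0 cψ0
      · exact eval_main ub Δt d1 d2 (χ := fun x => c * pd 1 (ρ t) x)
          (ψ := fun x => 1/2 * Kc * pd 1 (dvg (u t)) x) (hvt t 1) (hpvt t 1) cχ1 cψ1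
    -- pull out constants in the coupling/pressure integrals
    have hcχ0 : ∫ x in Q2, u t x 0 * (c * pd 0 (ρ t) x)
        = c * ∫ x in Q2, u t x 0 * pd 0 (ρ t) x := by
      rw [← integral_const_mul]; apply setIntegral_congr_fun measQ; intro x _; ring
    have hcχ1 : ∫ x in Q2, u t x 1 * (c * pd 1 (ρ t) x)
        = c * ∫ x in Q2, u t x 1 * pd 1 (ρ t) x := by
      rw [← integral_const_mul]; apply setIntegral_congr_fun measQ; intro x _; ring
    have hψ0 : ∫ x in Q2, u t x 0 * (1/2 * Kc * pd 0 (dvg (u t)) x)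
        = 1/2 * Kc * ∫ x in Q2, u t x 0 * pd 0 (dvg (u t)) x := by
      rw [← integral_const_mul]; apply setIntegral_congr_fun measQ; intro x _; ring
    have hψ1 : ∫ x in Q2, u t x 1 * (1/2 * Kc * pd 1 (dvg (u t)) x)
        = 1/2 * Kc * ∫ x in Q2, u t x 1 * pd 1 (dvg (u t)) x := by
      rw [← integral_const_mul]; apply setIntegral_congr_fun measQ; intro x _; ring
    have hZsum : (∫ x in Q2, u t x 0 * pd 0 (dvg (u t)) x)
          + (∫ x in Q2, u t x 1 * pd 1 (dvg (u t)) x)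
        = -(∫ x in Q2, (dvg (u t) x)^2) := by
      rw [hdvg_eq]
      exact dvg_eval (hvt t 0) (hvt t 1) (hpvt t 0) (hpvt t 1)
    -- nonnegativity and Cauchy–Schwarz bounds
    have hP0 := integral_sq_nonneg (pd 0 (ρ t))
    have hP1 := integral_sq_nonneg (pd 1 (ρ t))
    have hm00 := integral_sq_nonneg (pd 0 (fun y => u t y 0))
    have hm10 := integral_sq_nonneg (pd 1 (fun y => u t y 0))
    have hm01 := integral_sq_nonneg (pd 0 (fun y => u t y 1))
    have hm11 := integral_sq_nonneg (pd 1 (fun y => u t y 1))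
    have hDDnn := integral_sq_nonneg (dvg (u t))
    have hAρb := adv_sq_bound ub (hrt t)
    have hA0b := adv_sq_bound ub (hvt t 0)
    have hA1b := adv_sq_bound ub (hvt t 1)
    -- CFL consequences
    have hCFL' : Δt * (ub 0 ^ 2 + ub 1 ^ 2) ≤ 1 / 2 * min |ub 0| |ub 1| * min Δx₁ Δx₂ :=
      (le_div_iff₀ hS2).mp hCFL
    have hmu_nn : 0 ≤ min |ub 0| |ub 1| := le_min (abs_nonneg _) (abs_nonneg _)
    have hmx_pos : 0 < min Δx₁ Δx₂ := lt_min hΔx₁ hΔx₂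
    have hmmd1 : min |ub 0| |ub 1| * min Δx₁ Δx₂ ≤ d1 := by
      calc min |ub 0| |ub 1| * min Δx₁ Δx₂
          ≤ |ub 0| * Δx₁ := mul_le_mul (min_le_left _ _) (min_le_left _ _)
            hmx_pos.le (abs_nonneg _)
        _ = d1 := by rw [hd1def, mul_comm]
    have hmmd2 : min |ub 0| |ub 1| * min Δx₁ Δx₂ ≤ d2 := by
      calc min |ub 0| |ub 1| * min Δx₁ Δx₂
          ≤ |ub 1| * Δx₂ := mul_le_mul (min_le_right _ _) (min_le_right _ _)
            hmx_pos.le (abs_nonneg _)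
        _ = d2 := by rw [hd2def, mul_comm]
    rw [hmassEq, hmomEq, hcoup, hlapint, hcχ0, hcχ1, hψ0, hψ1]
    set S0 := ∫ x in Q2, u t x 0 * pd 0 (ρ t) x with hS0def
    set S1 := ∫ x in Q2, u t x 1 * pd 1 (ρ t) x with hS1def
    set P0 := ∫ x in Q2, (pd 0 (ρ t) x)^2 with hP0def
    set P1 := ∫ x in Q2, (pd 1 (ρ t) x)^2 with hP1def
    set Aρ := ∫ x in Q2, (adv ub (ρ t) x)^2 with hAρdef
    set A0 := ∫ x in Q2, (adv ub (fun y => u t y 0) x)^2 with hA0def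
    set A1 := ∫ x in Q2, (adv ub (fun y => u t y 1) x)^2 with hA1def
    set Z0 := ∫ x in Q2, u t x 0 * pd 0 (dvg (u t)) x with hZ0def
    set Z1 := ∫ x in Q2, u t x 1 * pd 1 (dvg (u t)) x with hZ1def
    set M00 := ∫ x in Q2, (pd 0 (fun y => u t y 0) x)^2 with hM00def
    set M10 := ∫ x in Q2, (pd 1 (fun y => u t y 0) x)^2 with hM10def
    set M01 := ∫ x in Q2, (pd 0 (fun y => u t y 1) x)^2 with hM01def
    set M11 := ∫ x in Q2, (pd 1 (fun y => u t y 1) x)^2 with hM11def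
    set DD := ∫ x in Q2, (dvg (u t) x)^2 with hDDdef
    -- three advection-vs-diffusion bounds
    have hbρ : Δt * Aρ ≤ 1/2 * (d1 * P0 + d2 * P1) := by
      have e1 : Δt * Aρ ≤ Δt * ((ub 0 ^ 2 + ub 1 ^ 2) * (P0 + P1)) :=
        mul_le_mul_of_nonneg_left hAρb hΔt.le
      have e3 : (Δt * (ub 0 ^ 2 + ub 1 ^ 2)) * (P0 + P1)
          ≤ (1 / 2 * min |ub 0| |ub 1| * min Δx₁ Δx₂) * (P0 + P1) :=
        mul_le_mul_of_nonneg_right hCFL' (add_nonneg hP0 hP1)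
      have e4 := mul_le_mul_of_nonneg_right hmmd1 hP0
      have e5 := mul_le_mul_of_nonneg_right hmmd2 hP1
      linarith [e1, e3, e4, e5]
    have hb0 : Δt * A0 ≤ 1/2 * (d1 * M00 + d2 * M10) := by
      have e1 : Δt * A0 ≤ Δt * ((ub 0 ^ 2 + ub 1 ^ 2) * (M00 + M10)) :=
        mul_le_mul_of_nonneg_left hA0b hΔt.le
      have e3 : (Δt * (ub 0 ^ 2 + ub 1 ^ 2)) * (M00 + M10)
          ≤ (1 / 2 * min |ub 0| |ub 1| * min Δx₁ Δx₂) * (M00 + M10) :=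
        mul_le_mul_of_nonneg_right hCFL' (add_nonneg hm00 hm10)
      have e4 := mul_le_mul_of_nonneg_right hmmd1 hm00
      have e5 := mul_le_mul_of_nonneg_right hmmd2 hm10
      linarith [e1, e3, e4, e5]
    have hb1 : Δt * A1 ≤ 1/2 * (d1 * M01 + d2 * M11) := by
      have e1 : Δt * A1 ≤ Δt * ((ub 0 ^ 2 + ub 1 ^ 2) * (M01 + M11)) :=
        mul_le_mul_of_nonneg_left hA1b hΔt.le
      have e3 : (Δt * (ub 0 ^ 2 + ub 1 ^ 2)) * (M01 + M11)
          ≤ (1 / 2 * min |ub 0| |ub 1| * min Δx₁ Δx₂) * (M01 + M11) :=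
        mul_le_mul_of_nonneg_right hCFL' (add_nonneg hm01 hm11)
      have e4 := mul_le_mul_of_nonneg_right hmmd1 hm01
      have e5 := mul_le_mul_of_nonneg_right hmmd2 hm11
      linarith [e1, e3, e4, e5]
    -- assemble
    have tρ : -2 * (ρb * (-S0 - S1)) + Δt * Aρ + 2 * Δt * (1/2 * Kc * -(P0 + P1))
          - (d1 * P0 + d2 * P1) ≤ 2 * ρb * (S0 + S1) := by
      linarith [hbρ, mul_nonneg (mul_nonneg hΔt.le hK.le) (add_nonneg hP0 hP1),
        mul_nonneg hd1.le hP0, mul_nonneg hd2.le hP1]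
    have tu : (-2 * (c * S0) + Δt * A0 + 2 * Δt * (1/2 * Kc * Z0)
            - (d1 * M00 + d2 * M10))
          + (-2 * (c * S1) + Δt * A1 + 2 * Δt * (1/2 * Kc * Z1)
            - (d1 * M01 + d2 * M11)) ≤ -2 * c * (S0 + S1) := by
      have hZK : Δt * Kc * (Z0 + Z1) = Δt * Kc * -DD := by rw [hZsum]
      linarith [hb0, hb1, hZK, mul_nonneg (mul_nonneg hΔt.le hK.le) hDDnn,
        mul_nonneg hd1.le hm00, mul_nonneg hd2.le hm10,
        mul_nonneg hd1.le hm01, mul_nonneg hd2.le hm11]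
    have g1 : c * (-2 * (ρb * (-S0 - S1)) + Δt * Aρ
          + 2 * Δt * (1/2 * Kc * -(P0 + P1)) - (d1 * P0 + d2 * P1))
        ≤ c * (2 * ρb * (S0 + S1)) := mul_le_mul_of_nonneg_left tρ hc.le
    have g2 : ρb * ((-2 * (c * S0) + Δt * A0 + 2 * Δt * (1/2 * Kc * Z0)
            - (d1 * M00 + d2 * M10))
          + (-2 * (c * S1) + Δt * A1 + 2 * Δt * (1/2 * Kc * Z1)
            - (d1 * M01 + d2 * M11)))
        ≤ ρb * (-2 * c * (S0 + S1)) := mul_le_mul_of_nonneg_left tu hρb.le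
    linarith [g1, g2]
  have main : AntitoneOn E (Set.Ici 0) := by
    apply antitoneOn_of_deriv_nonpos (convex_Ici 0)
    · exact (Differentiable.continuous (fun t => (hE t).differentiableAt)).continuousOn
    · intro t _
      exact (hE t).differentiableAt.differentiableWithinAt
    · intro t ht
      rw [interior_Ici] at ht
      rw [(hE t).deriv]
      exact key t (le_of_lt ht)
  have hval : ∀ s : ℝ,
      c * (∫ x in Set.pi Set.univ fun _ : Fin 2 => Set.Icc (0:ℝ) 1, (ρ s x) ^ 2)
        + ρb * (∫ x in Set.pi Set.univ fun _ : Fin 2 => Set.Icc (0:ℝ) 1,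
            ∑ i, (u s x i) ^ 2) = E s := by
    intro s
    rw [hQ]
    show _ = c * (∫ x in Q2, ρ s x * ρ s x)
      + ρb * (∫ x in Q2, (u s x 0 * u s x 0 + u s x 1 * u s x 1))
    congr 1
    · congr 1
      exact setIntegral_congr_fun measQ (fun x _ => pow_two (ρ s x))
    · congr 1
      apply setIntegral_congr_fun measQ
      intro x _
      simp [Fin.sum_univ_two, pow_two]
  intro a ha b hb hab
  have h := main ha hb hab
  calc c * (∫ x in Set.pi Set.univ fun _ : Fin 2 => Set.Icc (0:ℝ) 1, (ρ b x) ^ 2)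
        + ρb * (∫ x in Set.pi Set.univ fun _ : Fin 2 => Set.Icc (0:ℝ) 1,
            ∑ i, (u b x i) ^ 2) = E b := hval b
    _ ≤ E a := h
    _ = c * (∫ x in Set.pi Set.univ fun _ : Fin 2 => Set.Icc (0:ℝ) 1, (ρ a x) ^ 2)
        + ρb * (∫ x in Set.pi Set.univ fun _ : Fin 2 => Set.Icc (0:ℝ) 1,
            ∑ i, (u a x i) ^ 2) := (hval a).symm
end

section
/- Let N₁, N₂ ≥ 1 be integers, h₁, h₂, Δt > 0, and a ∈ ℝ with a ≠ 0. Let u₁, u₂ : (ℤ/N₁ℤ) × (ℤ/N₂ℤ) → ℝ be grid functions and define the discrete central divergence D(i,j) := (u₁(i+1,j) − u₁(i−1,j))/(2h₁) + (u₂(i,j+1) − u₂(i,j−1))/(2h₂). Suppose r, s ∈ ℝ with s ≠ 0 satisfy, for all grid indices (i,j), the relation s = r − Δt · a · s · D(i,j). Then s = r and D(i,j) = 0 for all (i,j). -/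
/-! Summing the relation `s = r − Δt·a·s·D(i,j)` over the whole periodic grid kills the
divergence term, since each difference `u(i+1) − u(i−1)` telescopes over a cyclic index
(discrete Gauss theorem). Hence `N₁N₂·s = N₁N₂·r`, i.e. `s = r`, and then `Δt·a·s·D(i,j) = 0`
at every node forces `D(i,j) = 0`. -/

open Finset

theorem Fintype.sum_sub_shift_eq_zero {G M : Type*} [AddGroup G] [Fintype G] [AddCommGroup M]
    (f : G → M) (c d : G) :
    ∑ i, (f (i + c) - f (i - d)) = 0 := by
  rw [sum_sub_distrib, Fintype.sum_equiv (Equiv.addRight c) (fun i => f (i + c)) f fun _ => rfl,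
    Fintype.sum_equiv (Equiv.subRight d) (fun i => f (i - d)) f fun _ => rfl, sub_self]

def centralDiv {G₁ G₂ K : Type*} [AddGroupWithOne G₁] [AddGroupWithOne G₂] [Field K]
    (h₁ h₂ : K) (u₁ u₂ : G₁ → G₂ → K) (i : G₁) (j : G₂) : K :=
  (u₁ (i + 1) j - u₁ (i - 1) j) / (2 * h₁) + (u₂ i (j + 1) - u₂ i (j - 1)) / (2 * h₂)

theorem sum_centralDiv_eq_zero {G₁ G₂ K : Type*} [AddGroupWithOne G₁] [AddGroupWithOne G₂]
    [Fintype G₁] [Fintype G₂] [Field K] (h₁ h₂ : K) (u₁ u₂ : G₁ → G₂ → K) :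
    ∑ p : G₁ × G₂, centralDiv h₁ h₂ u₁ u₂ p.1 p.2 = 0 := by
  have hx : ∀ j, ∑ i, (u₁ (i + 1) j - u₁ (i - 1) j) / (2 * h₁) = 0 := fun j => by
    rw [← sum_div, Fintype.sum_sub_shift_eq_zero (u₁ · j), zero_div]
  have hy : ∀ i, ∑ j, (u₂ i (j + 1) - u₂ i (j - 1)) / (2 * h₂) = 0 := fun i => by
    rw [← sum_div, Fintype.sum_sub_shift_eq_zero (u₂ i), zero_div]
  simp only [centralDiv, sum_add_distrib]
  rw [Fintype.sum_prod_type_right, Fintype.sum_prod_type]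
  simp only [hx, hy, sum_const_zero, add_zero]

theorem eq_and_eq_zero_of_forall_eq_sub_mul {ι K : Type*} [Fintype ι] [Nonempty ι] [Field K]
    [CharZero K] {f : ι → K} {r s k : K} (hk : k ≠ 0) (hf : ∑ x, f x = 0)
    (h : ∀ x, s = r - k * f x) : s = r ∧ ∀ x, f x = 0 := by
  have hsr : s = r := by
    have hsum : (Fintype.card ι : K) * s = Fintype.card ι * r := by
      calc (Fintype.card ι : K) * s = ∑ _x : ι, s := by simp
        _ = ∑ x, (r - k * f x) := sum_congr rfl fun x _ => h x
        _ = Fintype.card ι * r := by simp [sum_sub_distrib, ← mul_sum, hf]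
    exact mul_left_cancel₀ (Nat.cast_ne_zero.mpr Fintype.card_ne_zero) hsum
  refine ⟨hsr, fun x => ?_⟩
  have hx := h x
  rw [hsr, eq_comm, sub_eq_self, mul_eq_zero] at hx
  exact hx.resolve_left hk

theorem stmt_7_general (N₁ N₂ : ℕ) (hN₁ : 1 ≤ N₁) (hN₂ : 1 ≤ N₂)
    (h₁ h₂ Δt : ℝ) (hΔt : 0 < Δt)
    (a : ℝ) (ha : a ≠ 0)
    (u₁ u₂ : ZMod N₁ → ZMod N₂ → ℝ) (r s : ℝ) (hs : s ≠ 0)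
    (hrel : ∀ (i : ZMod N₁) (j : ZMod N₂),
      s = r - Δt * a * s *
        ((u₁ (i + 1) j - u₁ (i - 1) j) / (2 * h₁)
          + (u₂ i (j + 1) - u₂ i (j - 1)) / (2 * h₂))) :
    s = r ∧ ∀ (i : ZMod N₁) (j : ZMod N₂),
      (u₁ (i + 1) j - u₁ (i - 1) j) / (2 * h₁)
        + (u₂ i (j + 1) - u₂ i (j - 1)) / (2 * h₂) = 0 := by
  have : NeZero N₁ := ⟨by omega⟩
  have : NeZero N₂ := ⟨by omega⟩
  obtain ⟨hsr, hD⟩ := eq_and_eq_zero_of_forall_eq_sub_mul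
    (mul_ne_zero (mul_ne_zero hΔt.ne' ha) hs) (sum_centralDiv_eq_zero h₁ h₂ u₁ u₂)
    (fun p => hrel p.1 p.2)
  exact ⟨hsr, fun i j => hD (i, j)⟩

/-- Core argument in Theorems 6.1 and 6.3 (fully-discrete scheme): on a periodic
Cartesian grid `(ℤ/N₁ℤ) × (ℤ/N₂ℤ)`, if a constant `s ≠ 0` satisfies the implicit
update relation `s = r − Δt·a·s·D(i,j)` with `D` the discrete central divergence of
a grid velocity field, then `s = r` and the discrete divergence vanishes on the
whole grid. -/
theorem stmt_7 (N₁ N₂ : ℕ) (hN₁ : 1 ≤ N₁) (hN₂ : 1 ≤ N₂)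
    (h₁ h₂ Δt : ℝ) (hh₁ : 0 < h₁) (hh₂ : 0 < h₂) (hΔt : 0 < Δt)
    (a : ℝ) (ha : a ≠ 0)
    (u₁ u₂ : ZMod N₁ → ZMod N₂ → ℝ) (r s : ℝ) (hs : s ≠ 0)
    (hrel : ∀ (i : ZMod N₁) (j : ZMod N₂),
      s = r - Δt * a * s *
        ((u₁ (i + 1) j - u₁ (i - 1) j) / (2 * h₁)
          + (u₂ i (j + 1) - u₂ i (j - 1)) / (2 * h₂))) :
    s = r ∧ ∀ (i : ZMod N₁) (j : ZMod N₂),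
      (u₁ (i + 1) j - u₁ (i - 1) j) / (2 * h₁)
        + (u₂ i (j + 1) - u₂ i (j - 1)) / (2 * h₂) = 0 :=
  stmt_7_general N₁ N₂ hN₁ hN₂ h₁ h₂ Δt hΔt a ha u₁ u₂ r s hs hrel
end
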